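/- arXiv:2505.12181 — 11 statements merged into one kernel-verified Lean document; each statement's English description precedes it below -/
import Mathlib

section
/- Let (Ω, 𝓕, P) be a probability space, Y : Ω → ℝ a {0,1}-valued random variable with P(Y = 1) > 0, D : Ω → ℝ a {0,1}-valued random variable, and m : Ω → ℝ a measurable function with m, Dm integrable. If E[Y − m] = 0 and E[D(Y − m)] = 0, then the imputation-based (semi-supervised) true positive rate equals the true one: E[D·m] / E[m] = P(D = 1 | Y = 1). -/
open MeasureTheory ProbabilityTheory

/-- Consistency of the Infairness TPR functional: if the imputation `m`
satisfies the moment conditions `E[Y − m] = 0` and `E[D(Y − m)] = 0`, then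
`E[D·m] / E[m] = P(D = 1 ∣ Y = 1)`, assuming `P(Y = 1) > 0`. -/
theorem infairness_tpr_consistency {Ω : Type*} [MeasurableSpace Ω]
    (P : Measure Ω) [IsProbabilityMeasure P]
    (Y D m : Ω → ℝ) (hY : Measurable Y) (hD : Measurable D) (hm : Measurable m)
    (hY01 : ∀ ω, Y ω = 0 ∨ Y ω = 1) (hD01 : ∀ ω, D ω = 0 ∨ D ω = 1)
    (hYpos : 0 < P {ω | Y ω = 1})
    (hmInt : Integrable m P) (hDmInt : Integrable (fun ω => D ω * m ω) P)
    (hmom1 : ∫ ω, (Y ω - m ω) ∂P = 0)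
    (hmom2 : ∫ ω, D ω * (Y ω - m ω) ∂P = 0) :
    (∫ ω, D ω * m ω ∂P) / (∫ ω, m ω ∂P) =
      ((P[|{ω | Y ω = 1}]) {ω | D ω = 1}).toReal := by
  set T : Set Ω := {ω | Y ω = 1} with hT
  set S : Set Ω := {ω | D ω = 1} with hS
  have hTmeas : MeasurableSet T := hY (measurableSet_singleton 1)
  have hSmeas : MeasurableSet S := hD (measurableSet_singleton 1)
  -- Y is the indicator of T
  have hYind : Y = T.indicator (fun _ => (1 : ℝ)) := by
    funext ω
    rcases hY01 ω with h | h
    · simp [Set.indicator, hT, h]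
    · simp [Set.indicator, hT, h]
  have hDYind : (fun ω => D ω * Y ω) = (S ∩ T).indicator (fun _ => (1 : ℝ)) := by
    funext ω
    rcases hD01 ω with hd | hd <;> rcases hY01 ω with hy | hy <;>
      simp [Set.indicator, hS, hT, hd, hy]
  have hYint : Integrable Y P := by
    rw [hYind]
    exact (integrable_const (1 : ℝ)).indicator hTmeas
  have hDYint : Integrable (fun ω => D ω * Y ω) P := by
    rw [hDYind]
    exact (integrable_const (1 : ℝ)).indicator (hSmeas.inter hTmeas)
  have hIntY : ∫ ω, Y ω ∂P = (P T).toReal := by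
    rw [hYind, integral_indicator hTmeas]
    simp
    rfl
  have hIntDY : ∫ ω, D ω * Y ω ∂P = (P (S ∩ T)).toReal := by
    rw [hDYind, integral_indicator (hSmeas.inter hTmeas)]
    simp
    rfl
  -- moment conditions give equalities
  have h1 : ∫ ω, m ω ∂P = (P T).toReal := by
    have := integral_sub hYint hmInt
    rw [hmom1] at this
    have : ∫ ω, Y ω ∂P = ∫ ω, m ω ∂P := by linarith [this.symm]
    rw [← this, hIntY]
  have h2 : ∫ ω, D ω * m ω ∂P = (P (S ∩ T)).toReal := by
    have hsub : (fun ω => D ω * (Y ω - m ω)) =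
        fun ω => D ω * Y ω - D ω * m ω := by
      funext ω; ring
    rw [hsub] at hmom2
    have := integral_sub hDYint hDmInt
    rw [hmom2] at this
    have heq : ∫ ω, D ω * Y ω ∂P = ∫ ω, D ω * m ω ∂P := by linarith [this.symm]
    rw [← heq, hIntDY]
  rw [h1, h2, ProbabilityTheory.cond_apply hTmeas]
  have hTne : P T ≠ ⊤ := (measure_lt_top P T).ne
  have hTSne : P (T ∩ S) ≠ ⊤ := (measure_lt_top P _).ne
  rw [ENNReal.toReal_mul, ENNReal.toReal_inv, Set.inter_comm S T]
  rw [div_eq_inv_mul]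
end

section
/- Let (Ω, 𝓕, P) be a probability space, Y : Ω → ℝ a {0,1}-valued random variable with P(Y = 0) > 0, D : Ω → ℝ a {0,1}-valued random variable, and m : Ω → ℝ a measurable function with m, Dm integrable. If E[Y − m] = 0 and E[D(Y − m)] = 0, then the imputation-based (semi-supervised) false positive rate equals the true one: (E[D] − E[D·m]) / (1 − E[m]) = P(D = 1 | Y = 0). -/
open MeasureTheory ProbabilityTheory

/-- Consistency of the Infairness FPR functional: if the imputation `m`
satisfies the moment conditions `E[Y − m] = 0` and `E[D(Y − m)] = 0`, then
`(E[D] − E[D·m]) / (1 − E[m]) = P(D = 1 ∣ Y = 0)`, assuming `P(Y = 0) > 0`. -/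
theorem infairness_fpr_consistency {Ω : Type*} [MeasurableSpace Ω]
    (P : Measure Ω) [IsProbabilityMeasure P]
    (Y D m : Ω → ℝ) (hY : Measurable Y) (hD : Measurable D) (hm : Measurable m)
    (hY01 : ∀ ω, Y ω = 0 ∨ Y ω = 1) (hD01 : ∀ ω, D ω = 0 ∨ D ω = 1)
    (hYpos : 0 < P {ω | Y ω = 0})
    (hmInt : Integrable m P) (hDmInt : Integrable (fun ω => D ω * m ω) P)
    (hmom1 : ∫ ω, (Y ω - m ω) ∂P = 0)
    (hmom2 : ∫ ω, D ω * (Y ω - m ω) ∂P = 0) :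
    ((∫ ω, D ω ∂P) - ∫ ω, D ω * m ω ∂P) / (1 - ∫ ω, m ω ∂P) =
      ((P[|{ω | Y ω = 0}]) {ω | D ω = 1}).toReal := by
  set sY1 : Set Ω := {ω | Y ω = 1} with hsY1
  set sY0 : Set Ω := {ω | Y ω = 0} with hsY0
  set sD1 : Set Ω := {ω | D ω = 1} with hsD1
  have msY1 : MeasurableSet sY1 := hY (measurableSet_singleton 1)
  have msY0 : MeasurableSet sY0 := hY (measurableSet_singleton 0)
  have msD1 : MeasurableSet sD1 := hD (measurableSet_singleton 1)
  -- Y as indicator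
  have hYind : Y = Set.indicator sY1 (fun _ => (1 : ℝ)) := by
    funext ω
    rcases hY01 ω with h | h
    · simp [Set.indicator, hsY1, h]
    · simp [Set.indicator, hsY1, h]
  have hDYind : (fun ω => D ω * Y ω) = Set.indicator (sD1 ∩ sY1) (fun _ => (1 : ℝ)) := by
    funext ω
    rcases hD01 ω with hd | hd <;> rcases hY01 ω with hy | hy <;>
      simp [Set.indicator, hsD1, hsY1, hd, hy]
  have hDind : D = Set.indicator sD1 (fun _ => (1 : ℝ)) := by
    funext ω
    rcases hD01 ω with h | h
    · simp [Set.indicator, hsD1, h]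
    · simp [Set.indicator, hsD1, h]
  -- integrability
  have hYInt : Integrable Y P := by
    rw [hYind]; exact (integrable_const (1 : ℝ)).indicator msY1
  have hDYInt : Integrable (fun ω => D ω * Y ω) P := by
    rw [hDYind]; exact (integrable_const (1 : ℝ)).indicator (msD1.inter msY1)
  -- integral values
  have hIY : ∫ ω, Y ω ∂P = (P sY1).toReal := by
    rw [hYind]
    simp [integral_indicator msY1]
    rfl
  have hIDY : ∫ ω, D ω * Y ω ∂P = (P (sD1 ∩ sY1)).toReal := by
    rw [hDYind]
    simp [integral_indicator (msD1.inter msY1)]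
    rfl
  have hID : ∫ ω, D ω ∂P = (P sD1).toReal := by
    rw [hDind]
    simp [integral_indicator msD1]
    rfl
  -- from moment conditions
  have hm1 : ∫ ω, m ω ∂P = (P sY1).toReal := by
    have := integral_sub hYInt hmInt
    rw [hmom1] at this
    have h := this.symm
    rw [hIY] at h
    linarith [h]
  have hDm : ∫ ω, D ω * m ω ∂P = (P (sD1 ∩ sY1)).toReal := by
    have heq : (fun ω => D ω * (Y ω - m ω)) =
        (fun ω => D ω * Y ω - D ω * m ω) := by funext ω; ring
    rw [heq] at hmom2
    have := integral_sub hDYInt hDmInt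
    rw [hmom2] at this
    rw [hIDY] at this
    linarith [this.symm]
  -- measure arithmetic
  have hfin : ∀ s : Set Ω, P s ≠ ⊤ := fun s => measure_ne_top P s
  have hsplitY : P sY1 + P sY0 = 1 := by
    have hdisj : Disjoint sY1 sY0 := by
      rw [Set.disjoint_left]
      intro ω h1 h0
      simp only [hsY1, hsY0, Set.mem_setOf_eq] at h1 h0
      rw [h0] at h1; norm_num at h1
    have hunion : sY1 ∪ sY0 = Set.univ := by
      ext ω; simp only [Set.mem_union, hsY1, hsY0, Set.mem_setOf_eq, Set.mem_univ, iff_true]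
      rcases hY01 ω with h | h
      · exact Or.inr h
      · exact Or.inl h
    rw [← measure_union hdisj msY0, hunion, measure_univ]
  have hsplitD : P sD1 = P (sD1 ∩ sY1) + P (sD1 ∩ sY0) := by
    have hdisj : Disjoint (sD1 ∩ sY1) (sD1 ∩ sY0) := by
      rw [Set.disjoint_left]
      intro ω h1 h0
      have h1' : Y ω = 1 := h1.2
      have h0' : Y ω = 0 := h0.2
      rw [h0'] at h1'; norm_num at h1'
    have hunion : (sD1 ∩ sY1) ∪ (sD1 ∩ sY0) = sD1 := by
      ext ω
      simp only [Set.mem_union, Set.mem_inter_iff, hsY1, hsY0, Set.mem_setOf_eq]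
      constructor
      · rintro (⟨h, _⟩ | ⟨h, _⟩) <;> exact h
      · intro h
        rcases hY01 ω with hy | hy
        · exact Or.inr ⟨h, hy⟩
        · exact Or.inl ⟨h, hy⟩
    rw [← measure_union hdisj (msD1.inter msY0), hunion]
  -- toReal versions
  have hp0pos : (0:ℝ) < (P sY0).toReal := ENNReal.toReal_pos hYpos.ne' (hfin _)
  have hsplitY' : (P sY1).toReal + (P sY0).toReal = 1 := by
    rw [← ENNReal.toReal_add (hfin _) (hfin _), hsplitY]; simp
  have hsplitD' : (P sD1).toReal = (P (sD1 ∩ sY1)).toReal + (P (sD1 ∩ sY0)).toReal := by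
    rw [← ENNReal.toReal_add (hfin _) (hfin _), ← hsplitD]
  -- RHS
  have hcond : (P[|sY0]) sD1 = (P sY0)⁻¹ * P (sY0 ∩ sD1) := cond_apply msY0 P sD1
  have hinterswap : sY0 ∩ sD1 = sD1 ∩ sY0 := Set.inter_comm _ _
  rw [hcond, hinterswap, hID, hDm, hm1,
    ENNReal.toReal_mul, ENNReal.toReal_inv]
  rw [hsplitD']
  have h1 : (1 : ℝ) - (P sY1).toReal = (P sY0).toReal := by linarith
  rw [h1]
  field_simp
  ring
end

section
/- Let (Ω, 𝓕, P) be a probability space, Y : Ω → ℝ a {0,1}-valued random variable, D : Ω → ℝ a {0,1}-valued random variable with P(D = 0) > 0, and m : Ω → ℝ a measurable function with m, Dm integrable. If E[Y − m] = 0 and E[D(Y − m)] = 0, then the imputation-based (semi-supervised) negative predictive value equals the true one: (1 − E[D] − E[m] + E[D·m]) / (1 − E[D]) = P(Y = 0 | D = 0). -/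
open MeasureTheory ProbabilityTheory

/-- Consistency of the Infairness NPV functional: if the imputation `m`
satisfies the moment conditions `E[Y − m] = 0` and `E[D(Y − m)] = 0`, then
`(1 − E[D] − E[m] + E[D·m]) / (1 − E[D]) = P(Y = 0 ∣ D = 0)`, assuming
`P(D = 0) > 0`. -/
theorem infairness_npv_consistency {Ω : Type*} [MeasurableSpace Ω]
    (P : Measure Ω) [IsProbabilityMeasure P]
    (Y D m : Ω → ℝ) (hY : Measurable Y) (hD : Measurable D) (hm : Measurable m)
    (hY01 : ∀ ω, Y ω = 0 ∨ Y ω = 1) (hD01 : ∀ ω, D ω = 0 ∨ D ω = 1)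
    (hDpos : 0 < P {ω | D ω = 0})
    (hmInt : Integrable m P) (hDmInt : Integrable (fun ω => D ω * m ω) P)
    (hmom1 : ∫ ω, (Y ω - m ω) ∂P = 0)
    (hmom2 : ∫ ω, D ω * (Y ω - m ω) ∂P = 0) :
    (1 - (∫ ω, D ω ∂P) - (∫ ω, m ω ∂P) + ∫ ω, D ω * m ω ∂P) /
        (1 - ∫ ω, D ω ∂P) =
      ((P[|{ω | D ω = 0}]) {ω | Y ω = 0}).toReal := by
  set s : Set Ω := {ω | D ω = 0} with hs
  set t : Set Ω := {ω | Y ω = 0} with ht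
  have hsM : MeasurableSet s := hD (measurableSet_singleton 0)
  have htM : MeasurableSet t := hY (measurableSet_singleton 0)
  -- integrability of Y, D, D*Y
  have hbound : ∀ (f : Ω → ℝ), Measurable f → (∀ ω, f ω = 0 ∨ f ω = 1) → Integrable f P := by
    intro f hf h01
    refine (integrable_const (1 : ℝ)).mono' hf.aestronglyMeasurable ?_
    filter_upwards with ω
    rcases h01 ω with h | h <;> simp [h]
  have hYInt : Integrable Y P := hbound Y hY hY01
  have hDInt : Integrable D P := hbound D hD hD01
  have hDYInt : Integrable (fun ω => D ω * Y ω) P := by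
    refine hbound _ (hD.mul hY) ?_
    intro ω
    rcases hD01 ω with h | h <;> rcases hY01 ω with h' | h' <;> simp [h, h']
  -- moment conditions
  have hm1 : ∫ ω, m ω ∂P = ∫ ω, Y ω ∂P := by
    have := integral_sub hYInt hmInt
    rw [hmom1] at this; linarith [this]
  have hm2 : ∫ ω, D ω * m ω ∂P = ∫ ω, D ω * Y ω ∂P := by
    have heq : (fun ω => D ω * (Y ω - m ω)) = fun ω => D ω * Y ω - D ω * m ω := by
      funext ω; ring
    rw [heq, integral_sub hDYInt hDmInt] at hmom2
    linarith [hmom2]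
  -- indicator identities
  have hind : ∀ (A : Set Ω), MeasurableSet A →
      ∫ ω, (A.indicator (fun _ => (1:ℝ)) ω) ∂P = (P A).toReal := by
    intro A hA
    rw [integral_indicator hA]
    simp [Measure.restrict_apply_univ]
    rfl
  have hden : 1 - ∫ ω, D ω ∂P = (P s).toReal := by
    have h1 : (fun ω => 1 - D ω) = s.indicator (fun _ => (1:ℝ)) := by
      funext ω
      rcases hD01 ω with h | h <;> simp [Set.indicator, hs, h]
    have h2 : ∫ ω, (1 - D ω) ∂P = (P s).toReal := by rw [h1]; exact hind s hsM
    rw [integral_sub (integrable_const 1) hDInt] at h2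
    simpa using h2
  have hnum : 1 - (∫ ω, D ω ∂P) - (∫ ω, Y ω ∂P) + ∫ ω, D ω * Y ω ∂P
      = (P (s ∩ t)).toReal := by
    have h1 : (fun ω => (1 - D ω) * (1 - Y ω)) = (s ∩ t).indicator (fun _ => (1:ℝ)) := by
      funext ω
      rcases hD01 ω with h | h <;> rcases hY01 ω with h' | h' <;>
        simp [Set.indicator, hs, ht, h, h', Set.mem_inter_iff]
    have h2 : ∫ ω, (1 - D ω) * (1 - Y ω) ∂P = (P (s ∩ t)).toReal := by
      rw [h1]; exact hind _ (hsM.inter htM)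
    have h3 : (fun ω => (1 - D ω) * (1 - Y ω))
        = fun ω => (1 - D ω - Y ω) + D ω * Y ω := by funext ω; ring
    rw [h3, integral_add (by exact ((integrable_const 1).sub hDInt).sub hYInt) hDYInt,
      integral_sub (f := fun a => 1 - D a) (g := Y) ((integrable_const 1).sub hDInt) hYInt,
      integral_sub (f := fun _ => (1:ℝ)) (g := D) (integrable_const 1) hDInt] at h2
    simpa using h2
  -- conditional probability
  have hsne : P s ≠ 0 := hDpos.ne'
  have hsfin : P s ≠ ⊤ := measure_ne_top P s
  have hcond : ((P[|s]) t).toReal = (P (s ∩ t)).toReal / (P s).toReal := by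
    rw [cond_apply hsM, ENNReal.toReal_mul, ENNReal.toReal_inv]
    rw [div_eq_inv_mul]
  rw [hm1, hm2, hnum, hden, hcond]
end

section
/- Let (Ω, 𝓕, P) be a probability space, Y : Ω → ℝ a {0,1}-valued random variable, D : Ω → ℝ a {0,1}-valued random variable with E[D] + E[Y] > 0, and m : Ω → ℝ a measurable function with m, Dm integrable. If E[Y − m] = 0 and E[D(Y − m)] = 0, then the imputation-based (semi-supervised) F1-score equals the true one: 2·E[D·m] / (E[D] + E[m]) = 2·E[DY] / (E[D] + E[Y]). -/
open MeasureTheory ProbabilityTheory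

/-- Consistency of the Infairness F1 functional: if the imputation `m`
satisfies the moment conditions `E[Y − m] = 0` and `E[D(Y − m)] = 0`, then
`2·E[D·m] / (E[D] + E[m]) = 2·E[DY] / (E[D] + E[Y])`, assuming
`E[D] + E[Y] > 0`. -/
theorem infairness_f1_consistency {Ω : Type*} [MeasurableSpace Ω]
    (P : Measure Ω) [IsProbabilityMeasure P]
    (Y D m : Ω → ℝ) (hY : Measurable Y) (hD : Measurable D) (hm : Measurable m)
    (hY01 : ∀ ω, Y ω = 0 ∨ Y ω = 1) (hD01 : ∀ ω, D ω = 0 ∨ D ω = 1)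
    (hpos : 0 < (∫ ω, D ω ∂P) + ∫ ω, Y ω ∂P)
    (hmInt : Integrable m P) (hDmInt : Integrable (fun ω => D ω * m ω) P)
    (hmom1 : ∫ ω, (Y ω - m ω) ∂P = 0)
    (hmom2 : ∫ ω, D ω * (Y ω - m ω) ∂P = 0) :
    2 * (∫ ω, D ω * m ω ∂P) / ((∫ ω, D ω ∂P) + ∫ ω, m ω ∂P) =
      2 * (∫ ω, D ω * Y ω ∂P) / ((∫ ω, D ω ∂P) + ∫ ω, Y ω ∂P) := by
  have hYInt : Integrable Y P := by
    apply (integrable_const (1 : ℝ)).mono' hY.aestronglyMeasurable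
    filter_upwards with ω
    rcases hY01 ω with h | h <;> simp [h]
  have hDYInt : Integrable (fun ω => D ω * Y ω) P := by
    apply (integrable_const (1 : ℝ)).mono'
      (hD.mul hY).aestronglyMeasurable
    filter_upwards with ω
    rcases hY01 ω with h | h <;> rcases hD01 ω with h' | h' <;> simp [h, h']
  have h1 : ∫ ω, Y ω ∂P = ∫ ω, m ω ∂P := by
    have := integral_sub hYInt hmInt
    simp only [hmom1] at this
    linarith [this.symm]
  have h2 : ∫ ω, D ω * Y ω ∂P = ∫ ω, D ω * m ω ∂P := by
    have heq : (fun ω => D ω * (Y ω - m ω)) =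
        fun ω => D ω * Y ω - D ω * m ω := by funext ω; ring
    rw [heq] at hmom2
    have := integral_sub hDYInt hDmInt
    rw [hmom2] at this
    linarith [this.symm]
  rw [h1, h2]
end

section
/- Let (Ω, 𝓕, P) be a probability space, Y : Ω → ℝ a {0,1}-valued random variable, D : Ω → ℝ a {0,1}-valued random variable, and m : Ω → ℝ a measurable function with m, Dm integrable. If E[Y − m] = 0 and E[D(Y − m)] = 0, then the imputation-based (semi-supervised) accuracy equals the true one: 1 − E[m] − E[D] + 2·E[D·m] = 1 − E[(Y − D)²]. -/
open MeasureTheory ProbabilityTheory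

/-- Consistency of the Infairness accuracy functional: if the imputation `m`
satisfies the moment conditions `E[Y − m] = 0` and `E[D(Y − m)] = 0`, then
`1 − E[m] − E[D] + 2·E[D·m] = 1 − E[(Y − D)²]`. -/
theorem infairness_acc_consistency {Ω : Type*} [MeasurableSpace Ω]
    (P : Measure Ω) [IsProbabilityMeasure P]
    (Y D m : Ω → ℝ) (hY : Measurable Y) (hD : Measurable D) (hm : Measurable m)
    (hY01 : ∀ ω, Y ω = 0 ∨ Y ω = 1) (hD01 : ∀ ω, D ω = 0 ∨ D ω = 1)
    (hmInt : Integrable m P) (hDmInt : Integrable (fun ω => D ω * m ω) P)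
    (hmom1 : ∫ ω, (Y ω - m ω) ∂P = 0)
    (hmom2 : ∫ ω, D ω * (Y ω - m ω) ∂P = 0) :
    1 - (∫ ω, m ω ∂P) - (∫ ω, D ω ∂P) + 2 * ∫ ω, D ω * m ω ∂P =
      1 - ∫ ω, (Y ω - D ω) ^ 2 ∂P := by
  have hYb : ∀ ω, |Y ω| ≤ 1 := fun ω => by rcases hY01 ω with h | h <;> simp [h]
  have hDb : ∀ ω, |D ω| ≤ 1 := fun ω => by rcases hD01 ω with h | h <;> simp [h]
  have hYint : Integrable Y P :=
    (integrable_const (1 : ℝ)).mono' hY.aestronglyMeasurable (ae_of_all _ hYb)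
  have hDint : Integrable D P :=
    (integrable_const (1 : ℝ)).mono' hD.aestronglyMeasurable (ae_of_all _ hDb)
  have hDYint : Integrable (fun ω => D ω * Y ω) P :=
    (integrable_const (1 : ℝ)).mono' (hD.mul hY).aestronglyMeasurable
      (ae_of_all _ fun ω => by
        rw [Real.norm_eq_abs, abs_mul]
        calc |D ω| * |Y ω| ≤ 1 * 1 := mul_le_mul (hDb ω) (hYb ω) (abs_nonneg _) zero_le_one
        _ = 1 := one_mul 1)
  have h1 : ∫ ω, Y ω ∂P = ∫ ω, m ω ∂P := by
    have := integral_sub hYint hmInt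
    rw [this] at hmom1; linarith
  have h2 : ∫ ω, D ω * Y ω ∂P = ∫ ω, D ω * m ω ∂P := by
    have heq : (fun ω => D ω * (Y ω - m ω)) = fun ω => D ω * Y ω - D ω * m ω := by
      funext ω; ring
    rw [heq, integral_sub hDYint hDmInt] at hmom2; linarith
  have h3 : ∫ ω, (Y ω - D ω) ^ 2 ∂P
      = ∫ ω, Y ω ∂P - 2 * ∫ ω, D ω * Y ω ∂P + ∫ ω, D ω ∂P := by
    have heq : (fun ω => (Y ω - D ω) ^ 2) = fun ω => Y ω - 2 * (D ω * Y ω) + D ω := by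
      funext ω
      rcases hY01 ω with h | h <;> rcases hD01 ω with h' | h' <;> simp [h, h'] <;> ring
    rw [heq,
      integral_add
        ((hYint.sub (hDYint.const_mul 2)).congr
          (ae_of_all _ fun ω => rfl) :
          Integrable (fun ω => Y ω - 2 * (D ω * Y ω)) P) hDint,
      integral_sub hYint (hDYint.const_mul 2), MeasureTheory.integral_const_mul]
  rw [h3, ← h1, ← h2]; ring
end

section
/- Let (Ω, 𝓕, P) be a probability space, Y : Ω → ℝ a {0,1}-valued random variable, S : Ω → ℝ a random variable with values in [0,1], and m : Ω → ℝ a measurable function with m, Sm integrable. If E[Y − m] = 0 and E[S(Y − m)] = 0, then the imputation-based (semi-supervised) Brier score equals the true one: E[S²] − 2·E[S·m] + E[m] = E[(Y − S)²]. -/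
open MeasureTheory ProbabilityTheory

/-- Consistency of the Infairness Brier score functional: if the imputation `m`
satisfies the moment conditions `E[Y − m] = 0` and `E[S(Y − m)] = 0`, then
`E[S²] − 2·E[S·m] + E[m] = E[(Y − S)²]`. -/
theorem infairness_bs_consistency {Ω : Type*} [MeasurableSpace Ω]
    (P : Measure Ω) [IsProbabilityMeasure P]
    (Y S m : Ω → ℝ) (hY : Measurable Y) (hS : Measurable S) (hm : Measurable m)
    (hY01 : ∀ ω, Y ω = 0 ∨ Y ω = 1) (hS01 : ∀ ω, S ω ∈ Set.Icc (0 : ℝ) 1)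
    (hmInt : Integrable m P) (hSmInt : Integrable (fun ω => S ω * m ω) P)
    (hmom1 : ∫ ω, (Y ω - m ω) ∂P = 0)
    (hmom2 : ∫ ω, S ω * (Y ω - m ω) ∂P = 0) :
    (∫ ω, (S ω) ^ 2 ∂P) - 2 * (∫ ω, S ω * m ω ∂P) + ∫ ω, m ω ∂P =
      ∫ ω, (Y ω - S ω) ^ 2 ∂P := by
  have hYb : ∀ ω, |Y ω| ≤ 1 := by
    intro ω; rcases hY01 ω with h | h <;> simp [h]
  have hSb : ∀ ω, |S ω| ≤ 1 := by
    intro ω; rcases hS01 ω with ⟨h0, h1⟩; rw [abs_le]; constructor <;> linarith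
  have hYInt : Integrable Y P :=
    (integrable_const (1 : ℝ)).mono' hY.aestronglyMeasurable
      (Filter.Eventually.of_forall fun ω => by simpa using hYb ω)
  have hSYInt : Integrable (fun ω => S ω * Y ω) P :=
    (integrable_const (1 : ℝ)).mono' (hS.mul hY).aestronglyMeasurable
      (Filter.Eventually.of_forall fun ω => by
        simpa [abs_mul] using mul_le_one₀ (hSb ω) (abs_nonneg _) (hYb ω))
  have hS2Int : Integrable (fun ω => (S ω) ^ 2) P :=
    (integrable_const (1 : ℝ)).mono' (hS.pow_const 2).aestronglyMeasurable
      (Filter.Eventually.of_forall fun ω => by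
        simpa [abs_pow, pow_two] using
          mul_le_one₀ (hSb ω) (abs_nonneg _) (hSb ω))
  have h1 : ∫ ω, Y ω ∂P = ∫ ω, m ω ∂P := by
    have := integral_sub hYInt hmInt
    rw [hmom1] at this; linarith [this.symm]
  have h2 : ∫ ω, S ω * Y ω ∂P = ∫ ω, S ω * m ω ∂P := by
    have heq : (fun ω => S ω * (Y ω - m ω)) =
        fun ω => S ω * Y ω - S ω * m ω := by
      funext ω; ring
    rw [heq, integral_sub hSYInt hSmInt] at hmom2
    linarith
  have hexp : ∫ ω, (Y ω - S ω) ^ 2 ∂P =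
      (∫ ω, Y ω ∂P) - 2 * (∫ ω, S ω * Y ω ∂P) + ∫ ω, (S ω) ^ 2 ∂P := by
    have heq : (fun ω => (Y ω - S ω) ^ 2) =
        fun ω => Y ω - 2 * (S ω * Y ω) + (S ω) ^ 2 := by
      funext ω
      rcases hY01 ω with h | h <;> rw [h] <;> ring
    have hfInt : Integrable (fun ω => Y ω - 2 * (S ω * Y ω)) P :=
      hYInt.sub (hSYInt.const_mul 2)
    rw [heq, integral_add hfInt hS2Int,
      integral_sub hYInt (hSYInt.const_mul 2), MeasureTheory.integral_const_mul]
  rw [hexp, h1, h2]; ring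
end

section
/- Let (Ω, 𝓕, P) be a probability space and 𝓖 ⊆ 𝓕 a sub-σ-algebra. Let Y : Ω → ℝ be a {0,1}-valued random variable, D : Ω → ℝ a {0,1}-valued 𝓖-measurable random variable, and m a version of the conditional expectation E[Y | 𝓖] (so m takes values in [0,1] almost surely). Let t = E[DY]/E[Y], assuming E[Y] > 0. Then E[((Y − m)(D − t))²] ≤ E[(Y(D − t))²], and more precisely E[(Y(D − t))²] − E[((Y − m)(D − t))²] = E[(D − t)² m²]. In particular, if 0 < E[DY] < E[Y], the inequality is strict. -/
open MeasureTheory ProbabilityTheory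

private lemma my_integrable_of_bound {Ω : Type*} {𝓕 : MeasurableSpace Ω}
    (P : Measure Ω) [IsFiniteMeasure P] {f : Ω → ℝ}
    (hf : AEStronglyMeasurable f P) (C : ℝ) (hb : ∀ᵐ ω ∂P, |f ω| ≤ C) :
    Integrable f P :=
  ⟨hf, HasFiniteIntegral.of_bounded (by simpa [Real.norm_eq_abs] using hb)⟩

/-- TPR case of Corollary 1 (variance comparison): with `m` a version of
`E[Y ∣ 𝓖]`, `D` a {0,1}-valued 𝓖-measurable classification, `E[Y] > 0`, and
`t = E[DY]/E[Y]`, the second moment of the semi-supervised influence function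
`(Y − m)(D − t)` is dominated by that of the supervised one `Y(D − t)`, with
difference `E[(D − t)²m²]`; the inequality is strict if `0 < E[DY] < E[Y]`. -/
theorem infairness_tpr_variance_comparison {Ω : Type*} (𝓖 : MeasurableSpace Ω) {𝓕 : MeasurableSpace Ω}
    (P : Measure Ω) [IsProbabilityMeasure P]
    (h𝓖 : 𝓖 ≤ 𝓕)
    (Y D m : Ω → ℝ) (hY : Measurable Y) (hY01 : ∀ ω, Y ω = 0 ∨ Y ω = 1)
    (hD : Measurable[𝓖] D) (hD01 : ∀ ω, D ω = 0 ∨ D ω = 1)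
    (hm : m =ᵐ[P] P[Y|𝓖])
    (hEY : 0 < ∫ ω, Y ω ∂P)
    (t : ℝ) (ht : t = (∫ ω, D ω * Y ω ∂P) / ∫ ω, Y ω ∂P) :
    ((∫ ω, ((Y ω - m ω) * (D ω - t)) ^ 2 ∂P) ≤
        ∫ ω, (Y ω * (D ω - t)) ^ 2 ∂P) ∧
    ((∫ ω, (Y ω * (D ω - t)) ^ 2 ∂P) -
        (∫ ω, ((Y ω - m ω) * (D ω - t)) ^ 2 ∂P) =
      ∫ ω, (D ω - t) ^ 2 * (m ω) ^ 2 ∂P) ∧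
    (0 < ∫ ω, D ω * Y ω ∂P → (∫ ω, D ω * Y ω ∂P) < ∫ ω, Y ω ∂P →
      (∫ ω, ((Y ω - m ω) * (D ω - t)) ^ 2 ∂P) <
        ∫ ω, (Y ω * (D ω - t)) ^ 2 ∂P) := by
  set m' : Ω → ℝ := P[Y|𝓖] with hm'def
  have hYF : Measurable[𝓕] Y := hY
  have hDF : Measurable[𝓕] D := hD.mono h𝓖 le_rfl
  have hYb : ∀ ω, |Y ω| ≤ 1 := fun ω => by rcases hY01 ω with h | h <;> simp [h]
  have hDb : ∀ ω, |D ω - t| ≤ |t| + 1 := fun ω => by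
    rcases hD01 ω with h | h <;> rw [h] <;> cases abs_cases t <;> cases abs_cases (0 - t) <;>
      cases abs_cases (1 - t) <;> linarith
  have hYint : Integrable Y P := my_integrable_of_bound P hYF.aestronglyMeasurable 1
    (Filter.Eventually.of_forall hYb)
  have hm'sm : StronglyMeasurable[𝓖] m' := stronglyMeasurable_condExp
  have hm'meas : Measurable[𝓕] m' := (hm'sm.mono h𝓖).measurable
  have hm'0 : 0 ≤ᵐ[P] m' := condExp_nonneg (Filter.Eventually.of_forall fun ω => by
    rcases hY01 ω with h | h <;> simp [h])
  have hm'1 : m' ≤ᵐ[P] fun _ => (1 : ℝ) := by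
    have h1 : P[(fun _ => (1 : ℝ))|𝓖] = fun _ => (1 : ℝ) := condExp_const h𝓖 1
    have h2 := condExp_mono (μ := P) (m := 𝓖) hYint (integrable_const 1)
      (Filter.Eventually.of_forall fun ω => by
        rcases hY01 ω with h | h <;> simp [h])
    rwa [h1] at h2
  have hm'b : ∀ᵐ ω ∂P, |m' ω| ≤ 1 := by
    filter_upwards [hm'0, hm'1] with ω h0 h1
    simp only [Pi.zero_apply] at h0
    rw [abs_le]
    exact ⟨by linarith, h1⟩
  -- integrability of everything
  have hI1 : Integrable (fun ω => (Y ω * (D ω - t)) ^ 2) P := by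
    apply my_integrable_of_bound P
      ((hYF.mul (hDF.sub measurable_const)).pow_const 2).aestronglyMeasurable ((|t| + 1) ^ 2)
    refine Filter.Eventually.of_forall fun ω => ?_
    rw [abs_pow]
    calc |Y ω * (D ω - t)| ^ 2 = (|Y ω| * |D ω - t|) ^ 2 := by rw [abs_mul]
    _ ≤ (1 * (|t| + 1)) ^ 2 := by
        apply pow_le_pow_left₀ (by positivity)
        exact mul_le_mul (hYb ω) (hDb ω) (abs_nonneg _) zero_le_one
    _ = (|t| + 1) ^ 2 := by ring
  have hI2 : Integrable (fun ω => ((Y ω - m' ω) * (D ω - t)) ^ 2) P := by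
    apply my_integrable_of_bound P
      (((hYF.sub hm'meas).mul (hDF.sub measurable_const)).pow_const 2).aestronglyMeasurable
      ((2 * (|t| + 1)) ^ 2)
    filter_upwards [hm'b] with ω hb
    show |((Y ω - m' ω) * (D ω - t)) ^ 2| ≤ _
    rw [abs_pow, abs_mul]
    apply pow_le_pow_left₀ (by positivity)
    refine mul_le_mul ?_ (hDb ω) (abs_nonneg _) (by norm_num)
    calc |Y ω - m' ω| ≤ |Y ω| + |m' ω| := abs_sub _ _
    _ ≤ 2 := by linarith [hYb ω]
  have hI3 : Integrable (fun ω => (D ω - t) ^ 2 * m' ω ^ 2) P := by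
    apply my_integrable_of_bound P
      (((hDF.sub measurable_const).pow_const 2).mul (hm'meas.pow_const 2)).aestronglyMeasurable
      ((|t| + 1) ^ 2)
    filter_upwards [hm'b] with ω hb
    show |(D ω - t) ^ 2 * m' ω ^ 2| ≤ _
    rw [abs_mul, abs_pow, abs_pow]
    calc |D ω - t| ^ 2 * |m' ω| ^ 2 ≤ (|t| + 1) ^ 2 * 1 ^ 2 :=
          mul_le_mul (pow_le_pow_left₀ (abs_nonneg _) (hDb ω) 2)
            (pow_le_pow_left₀ (abs_nonneg _) hb 2) (by positivity) (by positivity)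
    _ = (|t| + 1) ^ 2 := by ring
  have hI4 : Integrable (fun ω => (D ω - t) ^ 2 * m' ω * Y ω) P := by
    apply my_integrable_of_bound P
      ((((hDF.sub measurable_const).pow_const 2).mul hm'meas).mul hYF).aestronglyMeasurable
      ((|t| + 1) ^ 2)
    filter_upwards [hm'b] with ω hb
    show |(D ω - t) ^ 2 * m' ω * Y ω| ≤ _
    rw [abs_mul, abs_mul, abs_pow]
    calc |D ω - t| ^ 2 * |m' ω| * |Y ω| ≤ (|t| + 1) ^ 2 * 1 * 1 :=
          mul_le_mul (mul_le_mul (pow_le_pow_left₀ (abs_nonneg _) (hDb ω) 2) hb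
            (abs_nonneg _) (by positivity)) (hYb ω) (abs_nonneg _) (by positivity)
    _ = (|t| + 1) ^ 2 := by ring
  have hm'2int : Integrable (fun ω => (m' ω) ^ 2) P := by
    apply my_integrable_of_bound P (hm'meas.pow_const 2).aestronglyMeasurable 1
    filter_upwards [hm'b] with ω hb
    rw [abs_pow]
    calc |m' ω| ^ 2 ≤ 1 ^ 2 := pow_le_pow_left₀ (abs_nonneg _) hb 2
    _ = 1 := one_pow 2
  -- tower property: ∫ (D-t)² m' Y = ∫ (D-t)² m'²
  have htower : ∫ ω, (D ω - t) ^ 2 * m' ω * Y ω ∂P = ∫ ω, (D ω - t) ^ 2 * m' ω ^ 2 ∂P := by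
    set f : Ω → ℝ := fun ω => (D ω - t) ^ 2 * m' ω with hfdef
    have hfsm : StronglyMeasurable[𝓖] f :=
      (((hD.sub measurable_const).pow_const 2).stronglyMeasurable).mul hm'sm
    have hpull := condExp_mul_of_stronglyMeasurable_left (μ := P) hfsm
      (by exact hI4) hYint
    have h1 : ∫ ω, (f * Y) ω ∂P = ∫ ω, (P[f * Y|𝓖]) ω ∂P :=
      (integral_condExp h𝓖).symm
    have h2 : ∫ ω, (P[f * Y|𝓖]) ω ∂P = ∫ ω, f ω * m' ω ∂P :=
      integral_congr_ae (hpull.mono fun ω h => by simpa using h)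
    have h3 : ∫ ω, (f * Y) ω ∂P = ∫ ω, (D ω - t) ^ 2 * m' ω * Y ω ∂P := rfl
    rw [h3] at h1
    rw [h1, h2]
    refine integral_congr_ae (Filter.Eventually.of_forall fun ω => ?_)
    simp only [hfdef]
    ring
  -- replace m by m' in goals
  have hrep1 : ∫ ω, ((Y ω - m ω) * (D ω - t)) ^ 2 ∂P
      = ∫ ω, ((Y ω - m' ω) * (D ω - t)) ^ 2 ∂P :=
    integral_congr_ae (hm.mono fun ω h => by simp only [h])
  have hrep2 : ∫ ω, (D ω - t) ^ 2 * (m ω) ^ 2 ∂P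
      = ∫ ω, (D ω - t) ^ 2 * (m' ω) ^ 2 ∂P :=
    integral_congr_ae (hm.mono fun ω h => by simp only [h])
  -- main identity
  have hkey : (∫ ω, (Y ω * (D ω - t)) ^ 2 ∂P)
      - (∫ ω, ((Y ω - m' ω) * (D ω - t)) ^ 2 ∂P)
      = ∫ ω, (D ω - t) ^ 2 * (m' ω) ^ 2 ∂P := by
    rw [← integral_sub hI1 hI2]
    calc ∫ ω, ((Y ω * (D ω - t)) ^ 2 - ((Y ω - m' ω) * (D ω - t)) ^ 2) ∂P
        = ∫ ω, (2 * ((D ω - t) ^ 2 * m' ω * Y ω) - (D ω - t) ^ 2 * m' ω ^ 2) ∂P :=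
          integral_congr_ae (Filter.Eventually.of_forall fun ω => by ring)
    _ = 2 * (∫ ω, (D ω - t) ^ 2 * m' ω * Y ω ∂P) - ∫ ω, (D ω - t) ^ 2 * m' ω ^ 2 ∂P := by
          rw [integral_sub (hI4.const_mul 2) hI3, integral_const_mul]
    _ = ∫ ω, (D ω - t) ^ 2 * m' ω ^ 2 ∂P := by rw [htower]; ring
  have hnn : 0 ≤ ∫ ω, (D ω - t) ^ 2 * (m' ω) ^ 2 ∂P :=
    integral_nonneg fun ω => by positivity
  refine ⟨by rw [hrep1]; linarith, by rw [hrep1, hrep2]; exact hkey, ?_⟩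
  -- strictness
  intro hDY0 hDYlt
  rw [hrep1]
  have ht0 : 0 < t := ht ▸ div_pos hDY0 hEY
  have ht1 : t < 1 := by rw [ht, div_lt_one hEY]; exact hDYlt
  set c : ℝ := min (t ^ 2) ((1 - t) ^ 2) with hcdef
  have hc0 : 0 < c := lt_min (pow_pos ht0 2) (pow_pos (by linarith) 2)
  have hclb : ∀ ω, c ≤ (D ω - t) ^ 2 := by
    intro ω
    rcases hD01 ω with h | h <;> rw [h]
    · have h' : c ≤ t ^ 2 := min_le_left _ _
      nlinarith
    · have h' : c ≤ (1 - t) ^ 2 := min_le_right _ _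
      nlinarith
  have hm'pos : 0 < ∫ ω, (m' ω) ^ 2 ∂P := by
    rcases lt_or_eq_of_le (integral_nonneg (f := fun ω => (m' ω) ^ 2) (μ := P) (fun ω => sq_nonneg (m' ω))) with h | h
    · exact h
    exfalso
    have hz : (fun ω => (m' ω) ^ 2) =ᵐ[P] 0 :=
      (integral_eq_zero_iff_of_nonneg_ae (Filter.Eventually.of_forall fun ω => sq_nonneg _)
        hm'2int).mp h.symm
    have hm'z : m' =ᵐ[P] 0 := hz.mono fun ω h => by
      simpa [pow_eq_zero_iff] using h
    have hint0 : ∫ ω, m' ω ∂P = 0 := by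
      rw [integral_congr_ae hm'z]; simp
    rw [hm'def, integral_condExp h𝓖] at hint0
    linarith
  have hmono : c * ∫ ω, (m' ω) ^ 2 ∂P ≤ ∫ ω, (D ω - t) ^ 2 * (m' ω) ^ 2 ∂P := by
    rw [← integral_const_mul]
    refine integral_mono_ae (hm'2int.const_mul c) hI3
      (Filter.Eventually.of_forall fun ω =>
        mul_le_mul_of_nonneg_right (hclb ω) (sq_nonneg _))
  have hpos : 0 < ∫ ω, (D ω - t) ^ 2 * (m' ω) ^ 2 ∂P :=
    lt_of_lt_of_le (by positivity) hmono
  linarith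
end

section
/- Let (Ω, 𝓕, P) be a probability space and 𝓖 ⊆ 𝓕 a sub-σ-algebra. Let Y : Ω → ℝ be a {0,1}-valued random variable, D : Ω → ℝ a {0,1}-valued 𝓖-measurable random variable, and m a version of the conditional expectation E[Y | 𝓖] (so m takes values in [0,1] almost surely). Let f = (E[D] − E[DY])/(1 − E[Y]), assuming P(Y = 0) > 0. Then E[((Y − m)(D − f))²] ≤ E[((1 − Y)(D − f))²], and more precisely E[((1 − Y)(D − f))²] − E[((Y − m)(D − f))²] = E[(D − f)² (1 − m)²]. In particular, if 0 < E[D] − E[DY] < 1 − E[Y], the inequality is strict. -/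
open MeasureTheory ProbabilityTheory

/-- FPR case of Corollary 1 (variance comparison): with `m` a version of
`E[Y ∣ 𝓖]`, `D` a {0,1}-valued 𝓖-measurable classification, `P(Y = 0) > 0`,
and `f = (E[D] − E[DY])/(1 − E[Y])`, the second moment of the semi-supervised
influence function `(Y − m)(D − f)` is dominated by that of the supervised one
`(1 − Y)(D − f)`, with difference `E[(D − f)²(1 − m)²]`; the inequality is
strict if `0 < E[D] − E[DY] < 1 − E[Y]`. -/
theorem infairness_fpr_variance_comparison {Ω : Type*} (𝓖 : MeasurableSpace Ω) {𝓕 : MeasurableSpace Ω}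
    (P : Measure Ω) [IsProbabilityMeasure P]
    (h𝓖 : 𝓖 ≤ 𝓕)
    (Y D m : Ω → ℝ) (hY : Measurable Y) (hY01 : ∀ ω, Y ω = 0 ∨ Y ω = 1)
    (hD : Measurable[𝓖] D) (hD01 : ∀ ω, D ω = 0 ∨ D ω = 1)
    (hm : m =ᵐ[P] P[Y|𝓖])
    (hY0 : 0 < P {ω | Y ω = 0})
    (f : ℝ) (hf : f = ((∫ ω, D ω ∂P) - ∫ ω, D ω * Y ω ∂P) / (1 - ∫ ω, Y ω ∂P)) :
    ((∫ ω, ((Y ω - m ω) * (D ω - f)) ^ 2 ∂P) ≤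
        ∫ ω, ((1 - Y ω) * (D ω - f)) ^ 2 ∂P) ∧
    ((∫ ω, ((1 - Y ω) * (D ω - f)) ^ 2 ∂P) -
        (∫ ω, ((Y ω - m ω) * (D ω - f)) ^ 2 ∂P) =
      ∫ ω, (D ω - f) ^ 2 * (1 - m ω) ^ 2 ∂P) ∧
    (0 < (∫ ω, D ω ∂P) - ∫ ω, D ω * Y ω ∂P →
      (∫ ω, D ω ∂P) - (∫ ω, D ω * Y ω ∂P) < 1 - ∫ ω, Y ω ∂P →
      (∫ ω, ((Y ω - m ω) * (D ω - f)) ^ 2 ∂P) <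
        ∫ ω, ((1 - Y ω) * (D ω - f)) ^ 2 ∂P) := by
  classical
  have hYF : Measurable[𝓕] Y := hY
  have hDF : Measurable[𝓕] D := hD.mono h𝓖 le_rfl
  set m' : Ω → ℝ := P[Y|𝓖] with hm'def
  set g : Ω → ℝ := fun ω => (D ω - f) ^ 2 with hgdef
  set b : ℝ := (1 + |f|) ^ 2 with hbdef
  have hb0 : (0 : ℝ) ≤ b := by rw [hbdef]; positivity
  have hgb : ∀ ω, 0 ≤ g ω ∧ g ω ≤ b := by
    intro ω
    rcases hD01 ω with h | h <;> simp only [hgdef, h] <;> constructor <;>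
      nlinarith [abs_nonneg f, sq_abs f, neg_abs_le f, le_abs_self f]
  have hYb : ∀ ω, 0 ≤ Y ω ∧ Y ω ≤ 1 := by
    intro ω; rcases hY01 ω with h | h <;> simp [h]
  have hg𝓖 : StronglyMeasurable[𝓖] g :=
    ((hD.sub measurable_const).pow_const 2).stronglyMeasurable
  have hgF : Measurable[𝓕] g := (hDF.sub measurable_const).pow_const 2
  have hgAE : AEStronglyMeasurable[𝓕] g P := hgF.aestronglyMeasurable
  have hYAE : AEStronglyMeasurable[𝓕] Y P := hYF.aestronglyMeasurable
  have hYint : Integrable Y P := by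
    refine ⟨hYAE,
      HasFiniteIntegral.of_bounded (C := 1) (Filter.Eventually.of_forall fun ω => ?_)⟩
    rw [Real.norm_eq_abs, abs_of_nonneg (hYb ω).1]; exact (hYb ω).2
  have hm'sm : StronglyMeasurable[𝓖] m' := stronglyMeasurable_condExp
  have hm'F : AEStronglyMeasurable[𝓕] m' P := (hm'sm.mono h𝓖).aestronglyMeasurable
  have hm'0 : ∀ᵐ ω ∂P, 0 ≤ m' ω :=
    condExp_nonneg (Filter.Eventually.of_forall fun ω => (hYb ω).1)
  have hm'1 : ∀ᵐ ω ∂P, m' ω ≤ 1 := by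
    have h := condExp_mono (μ := P) (m := 𝓖) hYint (integrable_const (1 : ℝ))
      (Filter.Eventually.of_forall fun ω => (hYb ω).2)
    rw [condExp_const h𝓖] at h
    exact h
  have ibdd : ∀ (u : Ω → ℝ), AEStronglyMeasurable[𝓕] u P → ∀ C : ℝ,
      (∀ᵐ ω ∂P, |u ω| ≤ C) → Integrable u P := by
    intro u hu C hb
    exact ⟨hu, HasFiniteIntegral.of_bounded (C := C)
      (by simpa [Real.norm_eq_abs] using hb)⟩
  have hkey : ∀ᵐ ω ∂P, 0 ≤ m' ω ∧ m' ω ≤ 1 := hm'0.and hm'1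
  have Ig : Integrable g P := by
    refine ibdd g hgAE b (Filter.Eventually.of_forall fun ω => ?_)
    rw [abs_of_nonneg (hgb ω).1]; exact (hgb ω).2
  have IgY : Integrable (fun ω => g ω * Y ω) P := by
    refine ibdd _ (hgAE.mul hYAE) b (Filter.Eventually.of_forall fun ω => ?_)
    obtain ⟨hg0, hg1⟩ := hgb ω; obtain ⟨hy0, hy1⟩ := hYb ω
    rw [abs_le]
    constructor <;>
      linarith [mul_nonneg hg0 hy0, mul_le_of_le_one_right hg0 hy1]
  have Igm : Integrable (fun ω => g ω * m' ω) P := by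
    refine ibdd _ (hgAE.mul hm'F) b ?_
    filter_upwards [hkey] with ω hk
    obtain ⟨hg0, hg1⟩ := hgb ω
    rw [abs_le]
    constructor <;>
      linarith [mul_nonneg hg0 hk.1, mul_le_of_le_one_right hg0 hk.2]
  have IgmY : Integrable (fun ω => g ω * m' ω * Y ω) P := by
    refine ibdd _ ((hgAE.mul hm'F).mul hYAE) b ?_
    filter_upwards [hkey] with ω hk
    obtain ⟨hg0, hg1⟩ := hgb ω; obtain ⟨hy0, hy1⟩ := hYb ω
    have h1 : 0 ≤ g ω * m' ω := mul_nonneg hg0 hk.1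
    rw [abs_le]
    constructor <;>
      linarith [mul_nonneg h1 hy0, mul_le_of_le_one_right h1 hy1,
        mul_le_of_le_one_right hg0 hk.2]
  have hm2AE : AEStronglyMeasurable[𝓕] (fun ω => m' ω ^ 2) P :=
    (hm'F.mul hm'F).congr (Filter.Eventually.of_forall fun ω => (sq (m' ω)).symm)
  have Igm2 : Integrable (fun ω => g ω * m' ω ^ 2) P := by
    refine ibdd _ (hgAE.mul hm2AE) b ?_
    filter_upwards [hkey] with ω hk
    obtain ⟨hg0, hg1⟩ := hgb ω
    have hm2 : m' ω ^ 2 ≤ 1 := by nlinarith [hk.1, hk.2]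
    rw [abs_le]
    constructor <;>
      linarith [mul_nonneg hg0 (sq_nonneg (m' ω)),
        mul_le_of_le_one_right hg0 hm2]
  have hq2AE : AEStronglyMeasurable[𝓕] (fun ω => (1 - m' ω) ^ 2) P := by
    have h1 : AEStronglyMeasurable[𝓕] (fun ω => (1 : ℝ) - m' ω) P :=
      aestronglyMeasurable_const.sub hm'F
    exact (h1.mul h1).congr (Filter.Eventually.of_forall fun ω => (sq (1 - m' ω)).symm)
  have Igq : Integrable (fun ω => g ω * (1 - m' ω) ^ 2) P := by
    refine ibdd _ (hgAE.mul hq2AE) b ?_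
    filter_upwards [hkey] with ω hk
    obtain ⟨hg0, hg1⟩ := hgb ω
    have hq1 : (1 - m' ω) ^ 2 ≤ 1 := by nlinarith [hk.1, hk.2]
    rw [abs_le]
    constructor <;>
      linarith [mul_nonneg hg0 (sq_nonneg (1 - m' ω)),
        mul_le_of_le_one_right hg0 hq1]
  -- tower property
  have tower : ∀ (φ : Ω → ℝ), StronglyMeasurable[𝓖] φ →
      Integrable (fun ω => φ ω * Y ω) P →
      ∫ ω, φ ω * Y ω ∂P = ∫ ω, φ ω * m' ω ∂P := by
    intro φ hφ hint
    have h1 : P[φ * Y|𝓖] =ᵐ[P] φ * P[Y|𝓖] :=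
      condExp_mul_of_stronglyMeasurable_left hφ hint hYint
    have h2 : ∫ ω, (P[φ * Y|𝓖]) ω ∂P = ∫ ω, (φ * Y) ω ∂P := integral_condExp h𝓖
    calc ∫ ω, φ ω * Y ω ∂P = ∫ ω, (P[φ * Y|𝓖]) ω ∂P := h2.symm
      _ = ∫ ω, φ ω * m' ω ∂P := integral_congr_ae h1
  have tA : ∫ ω, g ω * Y ω ∂P = ∫ ω, g ω * m' ω ∂P := tower g hg𝓖 IgY
  have tB : ∫ ω, g ω * m' ω * Y ω ∂P = ∫ ω, g ω * m' ω ^ 2 ∂P := by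
    have h := tower (fun ω => g ω * m' ω) (hg𝓖.mul hm'sm) IgmY
    rw [h]
    exact integral_congr_ae (Filter.Eventually.of_forall fun ω => by ring)
  have Esup : ∫ ω, ((1 - Y ω) * (D ω - f)) ^ 2 ∂P
      = (∫ ω, g ω ∂P) - ∫ ω, g ω * Y ω ∂P := by
    rw [← integral_sub Ig IgY]
    refine integral_congr_ae (Filter.Eventually.of_forall fun ω => ?_)
    rcases hY01 ω with h | h <;> simp only [hgdef, h] <;> ring
  have Esemi : ∫ ω, ((Y ω - m ω) * (D ω - f)) ^ 2 ∂P
      = (∫ ω, g ω * Y ω ∂P) - 2 * (∫ ω, g ω * m' ω * Y ω ∂P)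
        + ∫ ω, g ω * m' ω ^ 2 ∂P := by
    have e0 : ∫ ω, ((Y ω - m ω) * (D ω - f)) ^ 2 ∂P
        = ∫ ω, ((Y ω - m' ω) * (D ω - f)) ^ 2 ∂P := by
      refine integral_congr_ae ?_
      filter_upwards [hm] with ω h; simp only [h]
    have e1 : ∫ ω, ((Y ω - m' ω) * (D ω - f)) ^ 2 ∂P
        = ∫ ω, (g ω * Y ω - 2 * (g ω * m' ω * Y ω) + g ω * m' ω ^ 2) ∂P := by
      refine integral_congr_ae (Filter.Eventually.of_forall fun ω => ?_)
      rcases hY01 ω with h | h <;> simp only [hgdef, h] <;> ring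
    have I1 : Integrable (fun ω => g ω * Y ω - 2 * (g ω * m' ω * Y ω)) P :=
      IgY.sub (IgmY.const_mul 2)
    have I2 : Integrable (fun ω => 2 * (g ω * m' ω * Y ω)) P := IgmY.const_mul 2
    rw [e0, e1, integral_add I1 Igm2, integral_sub IgY I2, integral_const_mul 2]
  have Ediff : (∫ ω, ((1 - Y ω) * (D ω - f)) ^ 2 ∂P)
      - (∫ ω, ((Y ω - m ω) * (D ω - f)) ^ 2 ∂P)
      = ∫ ω, g ω * (1 - m' ω) ^ 2 ∂P := by
    have e2 : ∫ ω, g ω * (1 - m' ω) ^ 2 ∂P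
        = (∫ ω, g ω ∂P) - 2 * (∫ ω, g ω * m' ω ∂P) + ∫ ω, g ω * m' ω ^ 2 ∂P := by
      have e3 : ∫ ω, g ω * (1 - m' ω) ^ 2 ∂P
          = ∫ ω, (g ω - 2 * (g ω * m' ω) + g ω * m' ω ^ 2) ∂P :=
        integral_congr_ae (Filter.Eventually.of_forall fun ω => by ring)
      have I3 : Integrable (fun ω => g ω - 2 * (g ω * m' ω)) P :=
        Ig.sub (Igm.const_mul 2)
      have I4 : Integrable (fun ω => 2 * (g ω * m' ω)) P := Igm.const_mul 2
      rw [e3, integral_add I3 Igm2, integral_sub Ig I4, integral_const_mul 2]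
    rw [Esup, Esemi, e2, tA, tB]; ring
  have Eq2 : ∫ ω, g ω * (1 - m' ω) ^ 2 ∂P = ∫ ω, (D ω - f) ^ 2 * (1 - m ω) ^ 2 ∂P := by
    refine integral_congr_ae ?_
    filter_upwards [hm] with ω h; simp only [hgdef, h]
  have part2 : (∫ ω, ((1 - Y ω) * (D ω - f)) ^ 2 ∂P)
      - (∫ ω, ((Y ω - m ω) * (D ω - f)) ^ 2 ∂P)
      = ∫ ω, (D ω - f) ^ 2 * (1 - m ω) ^ 2 ∂P := by rw [Ediff, Eq2]
  have hnn : 0 ≤ ∫ ω, (D ω - f) ^ 2 * (1 - m ω) ^ 2 ∂P :=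
    integral_nonneg fun ω => by positivity
  refine ⟨by linarith, part2, ?_⟩
  intro h1 h2
  have hden : 0 < 1 - ∫ ω, Y ω ∂P := lt_trans h1 h2
  have hf0 : 0 < f := hf ▸ div_pos h1 hden
  have hf1 : f < 1 := hf ▸ (div_lt_one hden).2 h2
  have hgpos : ∀ ω, 0 < g ω := by
    intro ω
    rcases hD01 ω with h | h <;> simp only [hgdef, h] <;> nlinarith
  have hpos : 0 < ∫ ω, g ω * (1 - m' ω) ^ 2 ∂P := by
    rcases lt_or_eq_of_le (integral_nonneg
      (fun ω => mul_nonneg (hgb ω).1 (sq_nonneg _)) :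
        0 ≤ ∫ ω, g ω * (1 - m' ω) ^ 2 ∂P) with h | h
    · exact h
    exfalso
    have hz : (fun ω => g ω * (1 - m' ω) ^ 2) =ᵐ[P] 0 :=
      (integral_eq_zero_iff_of_nonneg
        (fun ω => mul_nonneg (hgb ω).1 (sq_nonneg _)) Igq).mp h.symm
    have hm1 : m' =ᵐ[P] fun _ => (1 : ℝ) := by
      filter_upwards [hz] with ω hω
      have hg := hgpos ω
      have hq0 : (1 - m' ω) ^ 2 = 0 := by
        by_contra hne
        have : 0 < g ω * (1 - m' ω) ^ 2 :=
          mul_pos hg (lt_of_le_of_ne (sq_nonneg _) (Ne.symm hne))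
        simp only [Pi.zero_apply] at hω
        linarith
      have h10 : 1 - m' ω = 0 := pow_eq_zero_iff (by norm_num) |>.mp hq0
      show m' ω = 1
      linarith
    have hi1 : ∫ ω, m' ω ∂P = 1 := by
      rw [integral_congr_ae hm1]
      simp
    have hi2 : ∫ ω, m' ω ∂P = ∫ ω, Y ω ∂P := integral_condExp h𝓖
    rw [hi2] at hi1
    linarith
  rw [← Eq2] at part2
  linarith
end

section
/- Let (Ω, 𝓕, P) be a probability space and 𝓖 ⊆ 𝓕 a sub-σ-algebra. Let Y : Ω → ℝ be a {0,1}-valued random variable, D : Ω → ℝ a {0,1}-valued 𝓖-measurable random variable with E[D] + E[Y] > 0, and m a version of the conditional expectation E[Y | 𝓖] (so m takes values in [0,1] almost surely). Let F1 = 2·E[DY]/(E[D] + E[Y]). Then E[((Y − m)(2D − F1))²] ≤ E[(2DY − F1·(D + Y))²], and more precisely E[(2DY − F1·(D + Y))²] − E[((Y − m)(2D − F1))²] = E[((2D − F1)·m − F1·D)²]. -/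
open MeasureTheory ProbabilityTheory

private lemma bdd_integrable {Ω : Type*} {𝓕 : MeasurableSpace Ω} {P : Measure Ω}
    [IsFiniteMeasure P] {f : Ω → ℝ} (hf : AEStronglyMeasurable f P) {C : ℝ}
    (h : ∀ᵐ ω ∂P, |f ω| ≤ C) : Integrable f P :=
  Integrable.mono' (integrable_const C) hf (by simpa [Real.norm_eq_abs] using h)

/-- F1 case of Corollary 1 (variance comparison): with `m` a version of
`E[Y ∣ 𝓖]`, `D` a {0,1}-valued 𝓖-measurable classification,
`E[D] + E[Y] > 0`, and `F1 = 2·E[DY]/(E[D] + E[Y])`, the second moment of the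
semi-supervised influence function `(Y − m)(2D − F1)` is dominated by that of
the supervised one `2DY − F1(D + Y)`, with difference
`E[((2D − F1)m − F1·D)²]`. -/
theorem infairness_f1_variance_comparison {Ω : Type*} (𝓖 : MeasurableSpace Ω) {𝓕 : MeasurableSpace Ω}
    (P : Measure Ω) [IsProbabilityMeasure P]
    (h𝓖 : 𝓖 ≤ 𝓕)
    (Y D m : Ω → ℝ) (hY : Measurable Y) (hY01 : ∀ ω, Y ω = 0 ∨ Y ω = 1)
    (hD : Measurable[𝓖] D) (hD01 : ∀ ω, D ω = 0 ∨ D ω = 1)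
    (hm : m =ᵐ[P] P[Y|𝓖])
    (hpos : 0 < (∫ ω, D ω ∂P) + ∫ ω, Y ω ∂P)
    (F1 : ℝ)
    (hF1 : F1 = 2 * (∫ ω, D ω * Y ω ∂P) / ((∫ ω, D ω ∂P) + ∫ ω, Y ω ∂P)) :
    ((∫ ω, ((Y ω - m ω) * (2 * D ω - F1)) ^ 2 ∂P) ≤
        ∫ ω, (2 * D ω * Y ω - F1 * (D ω + Y ω)) ^ 2 ∂P) ∧
    ((∫ ω, (2 * D ω * Y ω - F1 * (D ω + Y ω)) ^ 2 ∂P) -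
        (∫ ω, ((Y ω - m ω) * (2 * D ω - F1)) ^ 2 ∂P) =
      ∫ ω, ((2 * D ω - F1) * m ω - F1 * D ω) ^ 2 ∂P) := by
  classical
  set m' : Ω → ℝ := P[Y|𝓖] with hm'def
  -- bounds on Y and D
  have hYb : ∀ ω, |Y ω| ≤ 1 := by
    intro ω; rcases hY01 ω with h | h <;> simp [h]
  have hDb : ∀ ω, |D ω| ≤ 1 := by
    intro ω; rcases hD01 ω with h | h <;> simp [h]
  -- measurability facts
  have hYf : Measurable[𝓕] Y := hY
  have hDm : Measurable[𝓕] D := hD.mono h𝓖 le_rfl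
  have hm'G : Measurable[𝓖] m' := stronglyMeasurable_condExp.measurable
  have hm'm : Measurable[𝓕] m' := hm'G.mono h𝓖 le_rfl
  -- integrability of Y
  have hYint : Integrable Y P :=
    bdd_integrable hYf.aestronglyMeasurable (Filter.Eventually.of_forall hYb)
  -- a.e. bound on m'
  have hm'0 : 0 ≤ᵐ[P] m' := condExp_nonneg (Filter.Eventually.of_forall fun ω => by
    rcases hY01 ω with h | h <;> simp [h])
  have hm'1 : m' ≤ᵐ[P] fun _ => (1 : ℝ) := by
    have h1 : m' ≤ᵐ[P] P[(fun _ => (1 : ℝ))|𝓖] :=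
      condExp_mono hYint (integrable_const 1)
        (Filter.Eventually.of_forall fun ω => by rcases hY01 ω with h | h <;> simp [h])
    exact (condExp_const (μ := P) h𝓖 (1 : ℝ)) ▸ h1
  have hm'b : ∀ᵐ ω ∂P, |m' ω| ≤ 1 := by
    filter_upwards [hm'0, hm'1] with ω h0 h1
    simp only [Pi.zero_apply] at h0
    rw [abs_le]; exact ⟨by linarith, h1⟩
  -- the three functions
  set A : Ω → ℝ := fun ω => (Y ω - m' ω) * (2 * D ω - F1) with hA
  set h' : Ω → ℝ := fun ω => (2 * D ω - F1) * m' ω - F1 * D ω with hh'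
  set g : Ω → ℝ := fun ω => (2 * D ω - F1) * h' ω with hg
  -- bounds
  have hh'b : ∀ᵐ ω ∂P, |h' ω| ≤ (2 + |F1|) + |F1| := by
    filter_upwards [hm'b] with ω hmω
    have h1 : |2 * D ω - F1| ≤ 2 + |F1| := by
      calc |2 * D ω - F1| ≤ |2 * D ω| + |F1| := abs_sub _ _
        _ ≤ 2 + |F1| := by
          have := hDb ω
          rw [abs_mul]
          simp only [abs_two]
          nlinarith
    calc |h' ω| ≤ |(2 * D ω - F1) * m' ω| + |F1 * D ω| := abs_sub _ _
      _ ≤ (2 + |F1|) + |F1| := by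
        rw [abs_mul, abs_mul]
        have h2 := hDb ω
        have h3 := abs_nonneg (2 * D ω - F1)
        have h4 := abs_nonneg (F1)
        have h5 := abs_nonneg (m' ω)
        nlinarith
  have hgb : ∀ᵐ ω ∂P, |g ω| ≤ (2 + |F1|) * ((2 + |F1|) + |F1|) := by
    filter_upwards [hh'b] with ω hω
    have h1 : |2 * D ω - F1| ≤ 2 + |F1| := by
      calc |2 * D ω - F1| ≤ |2 * D ω| + |F1| := abs_sub _ _
        _ ≤ 2 + |F1| := by
          have := hDb ω; rw [abs_mul]; simp only [abs_two]; nlinarith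
    rw [hg]; dsimp only
    rw [abs_mul]
    exact mul_le_mul h1 hω (abs_nonneg _) (by positivity)
  have hAb : ∀ᵐ ω ∂P, |A ω| ≤ 2 * (2 + |F1|) := by
    filter_upwards [hm'b] with ω hω
    have h1 : |2 * D ω - F1| ≤ 2 + |F1| := by
      calc |2 * D ω - F1| ≤ |2 * D ω| + |F1| := abs_sub _ _
        _ ≤ 2 + |F1| := by
          have := hDb ω; rw [abs_mul]; simp only [abs_two]; nlinarith
    have h2 : |Y ω - m' ω| ≤ 2 := by
      have := hYb ω
      calc |Y ω - m' ω| ≤ |Y ω| + |m' ω| := abs_sub _ _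
        _ ≤ 2 := by linarith
    rw [hA]; dsimp only
    rw [abs_mul]
    exact mul_le_mul h2 h1 (abs_nonneg _) (by norm_num)
  -- measurability
  have hh'G : Measurable[𝓖] h' :=
    (((measurable_const.mul hD).sub measurable_const).mul hm'G).sub (measurable_const.mul hD)
  have hgG : Measurable[𝓖] g :=
    ((measurable_const.mul hD).sub measurable_const).mul hh'G
  have hgm : Measurable[𝓕] g := hgG.mono h𝓖 le_rfl
  have hh'm : Measurable[𝓕] h' := hh'G.mono h𝓖 le_rfl
  have hAm : Measurable[𝓕] A :=
    (hYf.sub hm'm).mul ((measurable_const.mul hDm).sub measurable_const)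
  -- integrability
  have hA2int : Integrable (fun ω => A ω ^ 2) P := by
    refine bdd_integrable (hAm.pow_const 2).aestronglyMeasurable (C := (2 * (2 + |F1|)) ^ 2) ?_
    filter_upwards [hAb] with ω hω
    calc |A ω ^ 2| = |A ω| ^ 2 := by rw [abs_pow]
      _ ≤ (2 * (2 + |F1|)) ^ 2 := by
        apply pow_le_pow_left₀ (abs_nonneg _) hω
  have hh2int : Integrable (fun ω => h' ω ^ 2) P := by
    refine bdd_integrable (hh'm.pow_const 2).aestronglyMeasurable (C := ((2 + |F1|) + |F1|) ^ 2) ?_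
    filter_upwards [hh'b] with ω hω
    calc |h' ω ^ 2| = |h' ω| ^ 2 := by rw [abs_pow]
      _ ≤ ((2 + |F1|) + |F1|) ^ 2 := by
        apply pow_le_pow_left₀ (abs_nonneg _) hω
  have hcrossint : Integrable (fun ω => (Y ω - m' ω) * g ω) P := by
    refine bdd_integrable ((hYf.sub hm'm).mul hgm).aestronglyMeasurable
      (C := 2 * ((2 + |F1|) * ((2 + |F1|) + |F1|))) ?_
    filter_upwards [hm'b, hgb] with ω h1 h2
    rw [abs_mul]
    have h3 : |Y ω - m' ω| ≤ 2 := by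
      have := hYb ω
      calc |Y ω - m' ω| ≤ |Y ω| + |m' ω| := abs_sub _ _
        _ ≤ 2 := by linarith
    exact mul_le_mul h3 h2 (abs_nonneg _) (by norm_num)
  have hgYint : Integrable (fun ω => g ω * Y ω) P := by
    refine bdd_integrable (hgm.mul hYf).aestronglyMeasurable
      (C := (2 + |F1|) * ((2 + |F1|) + |F1|) * 1) ?_
    filter_upwards [hgb] with ω h2
    rw [abs_mul]
    exact mul_le_mul h2 (hYb ω) (abs_nonneg _) (by positivity)
  have hgmint : Integrable (fun ω => g ω * m' ω) P := by
    refine bdd_integrable (hgm.mul hm'm).aestronglyMeasurable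
      (C := (2 + |F1|) * ((2 + |F1|) + |F1|) * 1) ?_
    filter_upwards [hgb, hm'b] with ω h2 h3
    rw [abs_mul]
    exact mul_le_mul h2 h3 (abs_nonneg _) (by positivity)
  have hN2int : Integrable (fun ω => (2 * D ω * Y ω - F1 * (D ω + Y ω)) ^ 2) P := by
    refine bdd_integrable
      (((((measurable_const.mul hDm).mul hYf).sub
          (measurable_const.mul (hDm.add hYf))).pow_const 2).aestronglyMeasurable)
      (C := (2 + 2 * |F1|) ^ 2) ?_
    refine Filter.Eventually.of_forall fun ω => ?_
    have h1 : |2 * D ω * Y ω - F1 * (D ω + Y ω)| ≤ 2 + 2 * |F1| := by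
      have hd := hDb ω; have hy := hYb ω
      calc |2 * D ω * Y ω - F1 * (D ω + Y ω)|
          ≤ |2 * D ω * Y ω| + |F1 * (D ω + Y ω)| := abs_sub _ _
        _ ≤ 2 + 2 * |F1| := by
            rw [abs_mul, abs_mul, abs_mul]
            simp only [abs_two]
            have h2 : |D ω + Y ω| ≤ 2 := (abs_add_le _ _).trans (by linarith)
            have h4 := abs_nonneg F1
            nlinarith [abs_nonneg (D ω), abs_nonneg (Y ω)]
    calc |(2 * D ω * Y ω - F1 * (D ω + Y ω)) ^ 2|
        = |2 * D ω * Y ω - F1 * (D ω + Y ω)| ^ 2 := by rw [abs_pow]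
      _ ≤ (2 + 2 * |F1|) ^ 2 := pow_le_pow_left₀ (abs_nonneg _) h1 _
  -- sigma-finiteness of trimmed measure
  haveI : SigmaFinite (P.trim h𝓖) := by
    have : IsFiniteMeasure (P.trim h𝓖) := isFiniteMeasure_trim h𝓖
    infer_instance
  -- the cross term vanishes
  have hcondexp : P[(fun ω => g ω * Y ω)|𝓖] =ᵐ[P] fun ω => g ω * m' ω := by
    have := condExp_mul_of_stronglyMeasurable_left (μ := P) (m := 𝓖)
      hgG.stronglyMeasurable (f := g) (g := Y) hgYint hYint
    exact this
  have hcross : ∫ ω, (Y ω - m' ω) * g ω ∂P = 0 := by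
    have h1 : ∫ ω, g ω * Y ω ∂P = ∫ ω, g ω * m' ω ∂P := by
      calc ∫ ω, g ω * Y ω ∂P = ∫ ω, (P[(fun ω => g ω * Y ω)|𝓖]) ω ∂P :=
            (integral_condExp h𝓖).symm
        _ = ∫ ω, g ω * m' ω ∂P := integral_congr_ae hcondexp
    have h2 : ∫ ω, (Y ω - m' ω) * g ω ∂P
        = ∫ ω, (g ω * Y ω - g ω * m' ω) ∂P :=
      integral_congr_ae (Filter.Eventually.of_forall fun ω => by ring)
    rw [h2, integral_sub hgYint hgmint, h1, sub_self]
  -- main decomposition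
  have hpt : ∀ ω, (2 * D ω * Y ω - F1 * (D ω + Y ω)) ^ 2
      = A ω ^ 2 + (2 * ((Y ω - m' ω) * g ω) + h' ω ^ 2) := by
    intro ω; rw [hA, hh', hg]; dsimp only; ring
  have hmain : ∫ ω, (2 * D ω * Y ω - F1 * (D ω + Y ω)) ^ 2 ∂P
      = (∫ ω, A ω ^ 2 ∂P) + ∫ ω, h' ω ^ 2 ∂P := by
    rw [show (fun ω => (2 * D ω * Y ω - F1 * (D ω + Y ω)) ^ 2)
        = fun ω => A ω ^ 2 + (2 * ((Y ω - m' ω) * g ω) + h' ω ^ 2) from funext hpt]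
    have hc2 : Integrable (fun ω => 2 * ((Y ω - m' ω) * g ω)) P := hcrossint.const_mul 2
    have hsum2 : Integrable (fun ω => 2 * ((Y ω - m' ω) * g ω) + h' ω ^ 2) P :=
      hc2.add hh2int
    rw [integral_add hA2int hsum2, integral_add hc2 hh2int, MeasureTheory.integral_const_mul, hcross]
    ring
  -- rewrite the statement integrals in terms of m'
  have e1 : ∫ ω, ((Y ω - m ω) * (2 * D ω - F1)) ^ 2 ∂P = ∫ ω, A ω ^ 2 ∂P := by
    refine integral_congr_ae ?_
    filter_upwards [hm] with ω hω
    rw [hA]; dsimp only; rw [hω]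
  have e2 : ∫ ω, ((2 * D ω - F1) * m ω - F1 * D ω) ^ 2 ∂P = ∫ ω, h' ω ^ 2 ∂P := by
    refine integral_congr_ae ?_
    filter_upwards [hm] with ω hω
    rw [hh']; dsimp only; rw [hω]
  have hnn : 0 ≤ ∫ ω, h' ω ^ 2 ∂P := integral_nonneg fun ω => sq_nonneg _
  constructor
  · rw [e1, hmain]; linarith
  · rw [e1, e2, hmain]; ring
end

section
/- Let (Ω, 𝓕, P) be a probability space and 𝓖 ⊆ 𝓕 a sub-σ-algebra. Let Y : Ω → ℝ be a {0,1}-valued random variable, D : Ω → ℝ a {0,1}-valued 𝓖-measurable random variable, and m a version of the conditional expectation E[Y | 𝓖] (so m takes values in [0,1] almost surely). Let ACC = 1 − E[(Y − D)²]. Then E[((Y − m)(2D − 1))²] ≤ E[(1 − (Y − D)² − ACC)²], and more precisely E[(1 − (Y − D)² − ACC)²] − E[((Y − m)(2D − 1))²] = E[(1 − D − ACC + (2D − 1)m)²]. -/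
open MeasureTheory ProbabilityTheory

/-- Accuracy case of Corollary 1 (variance comparison): with `m` a version of
`E[Y ∣ 𝓖]`, `D` a {0,1}-valued 𝓖-measurable classification, and
`ACC = 1 − E[(Y − D)²]`, the second moment of the semi-supervised influence
function `(Y − m)(2D − 1)` is dominated by that of the supervised one
`1 − (Y − D)² − ACC`, with difference `E[(1 − D − ACC + (2D − 1)m)²]`. -/
theorem infairness_acc_variance_comparison {Ω : Type*} (𝓖 : MeasurableSpace Ω) {𝓕 : MeasurableSpace Ω}
    (P : Measure Ω) [IsProbabilityMeasure P]
    (h𝓖 : 𝓖 ≤ 𝓕)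
    (Y D m : Ω → ℝ) (hY : Measurable Y) (hY01 : ∀ ω, Y ω = 0 ∨ Y ω = 1)
    (hD : Measurable[𝓖] D) (hD01 : ∀ ω, D ω = 0 ∨ D ω = 1)
    (hm : m =ᵐ[P] P[Y|𝓖])
    (ACC : ℝ) (hACC : ACC = 1 - ∫ ω, (Y ω - D ω) ^ 2 ∂P) :
    ((∫ ω, ((Y ω - m ω) * (2 * D ω - 1)) ^ 2 ∂P) ≤
        ∫ ω, (1 - (Y ω - D ω) ^ 2 - ACC) ^ 2 ∂P) ∧
    ((∫ ω, (1 - (Y ω - D ω) ^ 2 - ACC) ^ 2 ∂P) -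
        (∫ ω, ((Y ω - m ω) * (2 * D ω - 1)) ^ 2 ∂P) =
      ∫ ω, (1 - D ω - ACC + (2 * D ω - 1) * m ω) ^ 2 ∂P) := by
  haveI : SigmaFinite (P.trim h𝓖) := by
    apply isFiniteMeasure_trim h𝓖 |>.toSigmaFinite
  set m' : Ω → ℝ := P[Y|𝓖] with hm'def
  have hm'sm : StronglyMeasurable[𝓖] m' := stronglyMeasurable_condExp
  have hm'aesm : AEStronglyMeasurable[𝓕] m' P :=
    (hm'sm.mono h𝓖).aestronglyMeasurable
  have hYm : Measurable[𝓕] Y := hY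
  have hDm : Measurable[𝓕] D := hD.mono h𝓖 le_rfl
  have hm'meas : Measurable[𝓕] m' := (hm'sm.mono h𝓖).measurable
  have hm'b : ∀ᵐ ω ∂P, |m' ω| ≤ 1 := by
    have : ∀ᵐ ω ∂P, |Y ω| ≤ ((1 : NNReal) : ℝ) := by
      filter_upwards with ω
      rcases hY01 ω with h | h <;> rw [h] <;> norm_num
    simpa using ae_bdd_condExp_of_ae_bdd (m := 𝓖) this
  -- functions
  set g : Ω → ℝ := fun ω => (Y ω - m' ω) * (2 * D ω - 1) with hgdef
  set h : Ω → ℝ := fun ω => 1 - D ω - ACC + (2 * D ω - 1) * m' ω with hhdef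
  set k : Ω → ℝ := fun ω => (2 * D ω - 1) * h ω with hkdef
  -- integrability helper
  have bdd_int : ∀ (f : Ω → ℝ), AEStronglyMeasurable[𝓕] f P → ∀ (C : ℝ),
      (∀ᵐ ω ∂P, |f ω| ≤ C) → Integrable f P := by
    intro f hf C hC
    exact (integrable_const C).mono' hf (by simpa [Real.norm_eq_abs] using hC)
  have hgmeas : Measurable[𝓕] g :=
    (hYm.sub hm'meas).mul ((hDm.const_mul 2).sub measurable_const)
  have hgm : AEStronglyMeasurable[𝓕] g P := by
    apply Measurable.aestronglyMeasurable
    exact hgmeas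
  have hhmeas : Measurable[𝓕] h := by
    apply Measurable.add
    · exact (measurable_const.sub hDm).sub measurable_const
    · exact ((hDm.const_mul 2).sub measurable_const).mul hm'meas
  have hhm : AEStronglyMeasurable[𝓕] h P := hhmeas.aestronglyMeasurable
  have hkm : AEStronglyMeasurable[𝓕] k P :=
    (((hDm.const_mul 2).sub measurable_const).mul hhmeas).aestronglyMeasurable
  have habs : ∀ᵐ ω ∂P, |g ω| ≤ 2 ∧ |h ω| ≤ 3 + |ACC| := by
    filter_upwards [hm'b] with ω hmω
    rw [abs_le] at hmω
    constructor
    · simp only [hgdef, abs_le]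
      rcases hY01 ω with hy | hy <;> rcases hD01 ω with hd | hd <;>
        rw [hy, hd] <;> constructor <;> nlinarith [hmω.1, hmω.2]
    · simp only [hhdef, abs_le]
      rcases hD01 ω with hd | hd <;> rw [hd] <;> constructor <;>
        nlinarith [hmω.1, hmω.2, neg_abs_le ACC, le_abs_self ACC]
  have hg2m : AEStronglyMeasurable[𝓕] (fun ω => g ω ^ 2) P := by
    apply (hgm.mul hgm).congr
    filter_upwards with ω
    simp only [Pi.mul_apply, sq]
  have hh2m : AEStronglyMeasurable[𝓕] (fun ω => h ω ^ 2) P := by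
    apply (hhm.mul hhm).congr
    filter_upwards with ω
    simp only [Pi.mul_apply, sq]
  have hIg2 : Integrable (fun ω => g ω ^ 2) P := by
    apply bdd_int _ hg2m 4
    filter_upwards [habs] with ω hb
    obtain ⟨h1, -⟩ := hb
    rw [abs_le] at h1 ⊢; constructor <;> nlinarith
  have hIh2 : Integrable (fun ω => h ω ^ 2) P := by
    apply bdd_int _ hh2m ((3 + |ACC|) ^ 2)
    filter_upwards [habs] with ω hb
    obtain ⟨-, h2⟩ := hb
    rw [abs_le] at h2 ⊢; constructor <;> nlinarith [abs_nonneg ACC]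
  have hIgh : Integrable (fun ω => g ω * h ω) P := by
    apply bdd_int _ (hgm.mul hhm |>.congr (by filter_upwards with ω; simp [Pi.mul_apply])) (2 * (3 + |ACC|))
    filter_upwards [habs] with ω hb
    obtain ⟨h1, h2⟩ := hb
    calc |g ω * h ω| = |g ω| * |h ω| := abs_mul _ _
      _ ≤ 2 * (3 + |ACC|) := by
          apply mul_le_mul h1 h2 (abs_nonneg _) (by norm_num)
  have hYaesm : AEStronglyMeasurable[𝓕] Y P := by
    apply Measurable.aestronglyMeasurable
    exact hYm
  have hIY : Integrable Y P := by
    apply bdd_int _ hYaesm 1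
    filter_upwards with ω; rcases hY01 ω with hy | hy <;> rw [hy] <;> norm_num
  have hIkY : Integrable (fun ω => k ω * Y ω) P := by
    apply bdd_int _ ((hkm.mul hYaesm).congr (by filter_upwards with ω; simp [Pi.mul_apply])) (3 + |ACC|)
    filter_upwards [habs] with ω hb
    obtain ⟨-, h2⟩ := hb
    have hYb : |Y ω| ≤ 1 := by rcases hY01 ω with hy | hy <;> rw [hy] <;> norm_num
    have hDb : |2 * D ω - 1| ≤ 1 := by rcases hD01 ω with hd | hd <;> rw [hd] <;> norm_num
    calc |k ω * Y ω| = |2 * D ω - 1| * |h ω| * |Y ω| := by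
          simp only [hkdef, abs_mul]
      _ ≤ 1 * (3 + |ACC|) * 1 := by
          apply mul_le_mul _ hYb (abs_nonneg _) (by positivity)
          exact mul_le_mul hDb h2 (abs_nonneg _) (by norm_num)
      _ = 3 + |ACC| := by ring
  have hIkm' : Integrable (fun ω => k ω * m' ω) P := by
    apply bdd_int _ ((hkm.mul hm'aesm).congr (by filter_upwards with ω; simp [Pi.mul_apply])) (3 + |ACC|)
    filter_upwards [habs, hm'b] with ω hb hmb
    obtain ⟨-, h2⟩ := hb
    have hDb : |2 * D ω - 1| ≤ 1 := by rcases hD01 ω with hd | hd <;> rw [hd] <;> norm_num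
    calc |k ω * m' ω| = |2 * D ω - 1| * |h ω| * |m' ω| := by
          simp only [hkdef, abs_mul]
      _ ≤ 1 * (3 + |ACC|) * 1 := by
          apply mul_le_mul _ hmb (abs_nonneg _) (by positivity)
          exact mul_le_mul hDb h2 (abs_nonneg _) (by norm_num)
      _ = 3 + |ACC| := by ring
  -- k is 𝓖-strongly measurable
  have hksm : StronglyMeasurable[𝓖] k := by
    apply StronglyMeasurable.mul
    · exact ((hD.const_mul 2).sub measurable_const).stronglyMeasurable
    · apply StronglyMeasurable.add
      · exact ((measurable_const.sub hD).stronglyMeasurable).sub stronglyMeasurable_const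
      · exact (((hD.const_mul 2).sub measurable_const).stronglyMeasurable).mul hm'sm
  -- orthogonality: ∫ k * Y = ∫ k * m'
  have horth : (∫ ω, k ω * Y ω ∂P) = ∫ ω, k ω * m' ω ∂P := by
    have h1 : P[fun ω => k ω * Y ω|𝓖] =ᵐ[P] fun ω => k ω * m' ω := by
      have := condExp_mul_of_stronglyMeasurable_left (μ := P) hksm
        (f := k) (g := Y) (by simpa [Pi.mul_def] using hIkY) hIY
      simpa [Pi.mul_def] using this
    calc (∫ ω, k ω * Y ω ∂P) = ∫ ω, (P[fun ω => k ω * Y ω|𝓖]) ω ∂P :=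
          (integral_condExp h𝓖).symm
      _ = ∫ ω, k ω * m' ω ∂P := integral_congr_ae h1
  have hgh0 : (∫ ω, g ω * h ω ∂P) = 0 := by
    have heq : ∀ ω, g ω * h ω = k ω * Y ω - k ω * m' ω := by
      intro ω; simp only [hgdef, hkdef]; ring
    rw [show (fun ω => g ω * h ω) = fun ω => k ω * Y ω - k ω * m' ω from funext heq,
      integral_sub hIkY hIkm', horth, sub_self]
  -- pointwise decomposition with m' (a.e.)
  have hdecomp : ∀ᵐ ω ∂P, 1 - (Y ω - D ω) ^ 2 - ACC = g ω + h ω := by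
    filter_upwards with ω
    simp only [hgdef, hhdef]
    rcases hY01 ω with hy | hy <;> rcases hD01 ω with hd | hd <;> rw [hy, hd] <;> ring
  have hg_eq : (∫ ω, ((Y ω - m ω) * (2 * D ω - 1)) ^ 2 ∂P) = ∫ ω, g ω ^ 2 ∂P := by
    apply integral_congr_ae
    filter_upwards [hm] with ω hmω
    simp only [hgdef]
    rw [hmω]
  have hh_eq : (∫ ω, (1 - D ω - ACC + (2 * D ω - 1) * m ω) ^ 2 ∂P) = ∫ ω, h ω ^ 2 ∂P := by
    apply integral_congr_ae
    filter_upwards [hm] with ω hmω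
    simp only [hhdef]
    rw [hmω]
  have hf_eq : (∫ ω, (1 - (Y ω - D ω) ^ 2 - ACC) ^ 2 ∂P)
      = (∫ ω, g ω ^ 2 ∂P) + ∫ ω, h ω ^ 2 ∂P := by
    have : (∫ ω, (1 - (Y ω - D ω) ^ 2 - ACC) ^ 2 ∂P)
        = ∫ ω, (g ω ^ 2 + 2 * (g ω * h ω) + h ω ^ 2) ∂P := by
      apply integral_congr_ae
      filter_upwards [hdecomp] with ω hω
      rw [hω]; ring
    have hsum : Integrable (fun ω => g ω ^ 2 + 2 * (g ω * h ω)) P :=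
      hIg2.add (hIgh.const_mul 2)
    rw [this, integral_add hsum hIh2, integral_add hIg2 (hIgh.const_mul 2),
      integral_const_mul, hgh0]
    ring
  have hh2nn : (0 : ℝ) ≤ ∫ ω, h ω ^ 2 ∂P := integral_nonneg fun ω => sq_nonneg _
  constructor
  · rw [hg_eq, hf_eq]; linarith
  · rw [hg_eq, hf_eq, hh_eq]; ring
end

section
/- Let (Ω, 𝓕, P) be a probability space and 𝓖 ⊆ 𝓕 a sub-σ-algebra. Let Y : Ω → ℝ be a {0,1}-valued random variable, S : Ω → ℝ a 𝓖-measurable random variable with values in [0,1], and m a version of the conditional expectation E[Y | 𝓖] (so m takes values in [0,1] almost surely). Let BS = E[(Y − S)²]. Then E[((Y − m)(1 − 2S))²] ≤ E[((Y − S)² − BS)²], and more precisely E[((Y − S)² − BS)²] − E[((Y − m)(1 − 2S))²] = E[(S² − 2S·m + m − BS)²]. -/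
open MeasureTheory ProbabilityTheory

/-- Brier-score case of Corollary 1 (variance comparison): with `m` a version
of `E[Y ∣ 𝓖]`, `S` a 𝓖-measurable prediction with values in `[0,1]`, and
`BS = E[(Y − S)²]`, the second moment of the semi-supervised influence function
`(Y − m)(1 − 2S)` is dominated by that of the supervised one `(Y − S)² − BS`,
with difference `E[(S² − 2S·m + m − BS)²]`. -/
theorem infairness_bs_variance_comparison {Ω : Type*} (𝓖 : MeasurableSpace Ω) {𝓕 : MeasurableSpace Ω}
    (P : Measure Ω) [IsProbabilityMeasure P]
    (h𝓖 : 𝓖 ≤ 𝓕)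
    (Y S m : Ω → ℝ) (hY : Measurable Y) (hY01 : ∀ ω, Y ω = 0 ∨ Y ω = 1)
    (hS : Measurable[𝓖] S) (hS01 : ∀ ω, S ω ∈ Set.Icc (0 : ℝ) 1)
    (hm : m =ᵐ[P] P[Y|𝓖])
    (BS : ℝ) (hBS : BS = ∫ ω, (Y ω - S ω) ^ 2 ∂P) :
    ((∫ ω, ((Y ω - m ω) * (1 - 2 * S ω)) ^ 2 ∂P) ≤
        ∫ ω, ((Y ω - S ω) ^ 2 - BS) ^ 2 ∂P) ∧
    ((∫ ω, ((Y ω - S ω) ^ 2 - BS) ^ 2 ∂P) -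
        (∫ ω, ((Y ω - m ω) * (1 - 2 * S ω)) ^ 2 ∂P) =
      ∫ ω, ((S ω) ^ 2 - 2 * S ω * m ω + m ω - BS) ^ 2 ∂P) := by
  classical
  set m' : Ω → ℝ := P[Y|𝓖] with hm'def
  set g' : Ω → ℝ := fun ω => (Y ω - m' ω) * (1 - 2 * S ω) with hg'def
  set h' : Ω → ℝ := fun ω => (S ω) ^ 2 - 2 * S ω * m' ω + m' ω - BS with hh'def
  have hSm : Measurable[𝓕] S := hS.mono h𝓖 le_rfl
  have hYf : Measurable[𝓕] Y := hY
  have hYae : AEStronglyMeasurable[𝓕] Y P := hYf.aestronglyMeasurable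
  have hSae : AEStronglyMeasurable[𝓕] S P := hSm.aestronglyMeasurable
  have hY1 : ∀ ω, ‖Y ω‖ ≤ 1 := by
    intro ω; rcases hY01 ω with h0 | h0 <;> simp [h0]
  have hYint : Integrable Y P :=
    (integrable_const (1 : ℝ)).mono' hYae (Filter.Eventually.of_forall hY1)
  -- a.e. bound on the conditional expectation
  have hm'0 : 0 ≤ᵐ[P] m' := condExp_nonneg (Filter.Eventually.of_forall fun ω => by
    rcases hY01 ω with h0 | h0 <;> simp [h0])
  have hm'1 : m' ≤ᵐ[P] fun _ => (1 : ℝ) := by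
    have h1 : P[fun _ : Ω => (1 : ℝ)|𝓖] = fun _ => (1 : ℝ) := condExp_const h𝓖 1
    have := condExp_mono (μ := P) (m := 𝓖) hYint (integrable_const (1 : ℝ))
      (Filter.Eventually.of_forall fun ω => by
        rcases hY01 ω with h0 | h0 <;> simp [h0])
    rw [h1] at this; exact this
  have hm'01 : ∀ᵐ ω ∂P, 0 ≤ m' ω ∧ m' ω ≤ 1 := by
    filter_upwards [hm'0, hm'1] with ω ha hb; exact ⟨ha, hb⟩
  -- strong measurability of primed versions
  have hm'sm : StronglyMeasurable[𝓖] m' := stronglyMeasurable_condExp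
  have hm'meas : AEStronglyMeasurable[𝓕] m' P :=
    (hm'sm.mono h𝓖).aestronglyMeasurable
  have hg'meas : AEStronglyMeasurable[𝓕] g' P :=
    (hYae.sub hm'meas).mul (aestronglyMeasurable_const.sub (hSae.const_mul 2))
  have hh'meas : AEStronglyMeasurable[𝓕] h' P :=
    (((hSae.pow 2).sub ((hSae.const_mul 2).mul hm'meas)).add hm'meas).sub
      aestronglyMeasurable_const
  -- pointwise bounds
  have h1S : ∀ ω, |1 - 2 * S ω| ≤ 3 := by
    intro ω
    have hs := hS01 ω
    simp only [Set.mem_Icc] at hs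
    rw [abs_le]; constructor <;> linarith [hs.1, hs.2]
  have hg'bd : ∀ᵐ ω ∂P, ‖g' ω‖ ≤ 6 := by
    filter_upwards [hm'01] with ω hω01
    obtain ⟨ha, hb⟩ := hω01
    have hy2 : |Y ω - m' ω| ≤ 2 := by
      rcases hY01 ω with hy | hy <;> rw [abs_le] <;> constructor <;>
        simp only [hy] <;> linarith
    calc ‖g' ω‖ = |Y ω - m' ω| * |1 - 2 * S ω| := by
          rw [hg'def]; rw [Real.norm_eq_abs, abs_mul]
      _ ≤ 2 * 3 := mul_le_mul hy2 (h1S ω) (abs_nonneg _) (by norm_num)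
      _ = 6 := by norm_num
  have hh'bd : ∀ᵐ ω ∂P, ‖h' ω‖ ≤ 4 + |BS| := by
    filter_upwards [hm'01] with ω hω01
    obtain ⟨ha, hb⟩ := hω01
    have hs1 := (hS01 ω).1
    have hs2 := (hS01 ω).2
    have hcore : |(S ω) ^ 2 - 2 * S ω * m' ω + m' ω| ≤ 4 := by
      rw [abs_le]
      constructor <;> nlinarith [mul_nonneg hs1 ha, sq_nonneg (S ω),
        mul_le_one₀ hs2 ha hb]
    calc ‖h' ω‖ = |((S ω) ^ 2 - 2 * S ω * m' ω + m' ω) - BS| := by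
          rw [hh'def]; rw [Real.norm_eq_abs]
      _ ≤ |(S ω) ^ 2 - 2 * S ω * m' ω + m' ω| + |BS| := abs_sub _ _
      _ ≤ 4 + |BS| := by linarith
  -- integrability
  have hg2int : Integrable (fun ω => g' ω ^ 2) P := by
    refine (integrable_const (36 : ℝ)).mono' (hg'meas.pow 2) ?_
    filter_upwards [hg'bd] with ω hω
    have he : ‖g' ω ^ 2‖ = ‖g' ω‖ ^ 2 := by
      rw [Real.norm_eq_abs, Real.norm_eq_abs, ← abs_pow]
    rw [he]; nlinarith [norm_nonneg (g' ω)]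
  have hh2int : Integrable (fun ω => h' ω ^ 2) P := by
    refine (integrable_const ((4 + |BS|) ^ 2 : ℝ)).mono' (hh'meas.pow 2) ?_
    filter_upwards [hh'bd] with ω hω
    have he : ‖h' ω ^ 2‖ = ‖h' ω‖ ^ 2 := by
      rw [Real.norm_eq_abs, Real.norm_eq_abs, ← abs_pow]
    rw [he]; nlinarith [norm_nonneg (h' ω), abs_nonneg BS]
  have hghint : Integrable (fun ω => g' ω * h' ω) P := by
    refine (integrable_const (6 * (4 + |BS|) : ℝ)).mono' (hg'meas.mul hh'meas) ?_
    filter_upwards [hg'bd, hh'bd] with ω ha hb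
    calc ‖g' ω * h' ω‖ = ‖g' ω‖ * ‖h' ω‖ := norm_mul _ _
      _ ≤ 6 * (4 + |BS|) := mul_le_mul ha hb (norm_nonneg _) (by norm_num)
  -- the cross term vanishes
  set X : Ω → ℝ := fun ω => (1 - 2 * S ω) *
      ((S ω) ^ 2 - 2 * S ω * m' ω + m' ω - BS) with hXdef
  have hXeq : ∀ ω, X ω = (1 - 2 * S ω) * h' ω := fun ω => by
    rw [hXdef, hh'def]
  have hXsm : StronglyMeasurable[𝓖] X := by
    have hSsm : StronglyMeasurable[𝓖] S := hS.stronglyMeasurable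
    exact (stronglyMeasurable_const.sub (hSsm.const_mul 2)).mul
      ((((hSsm.pow 2).sub ((hSsm.const_mul 2).mul hm'sm)).add hm'sm).sub
        stronglyMeasurable_const)
  have hXbd : ∀ᵐ ω ∂P, ‖X ω‖ ≤ 3 * (4 + |BS|) := by
    filter_upwards [hh'bd] with ω hω
    rw [hXeq ω]
    calc ‖(1 - 2 * S ω) * h' ω‖ = |1 - 2 * S ω| * ‖h' ω‖ := by
          rw [norm_mul, Real.norm_eq_abs]
      _ ≤ 3 * (4 + |BS|) :=
          mul_le_mul (h1S ω) hω (norm_nonneg _) (by norm_num)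
  have hXmeas : AEStronglyMeasurable[𝓕] X P := (hXsm.mono h𝓖).aestronglyMeasurable
  have hXYint : Integrable (fun ω => X ω * Y ω) P := by
    refine (integrable_const (3 * (4 + |BS|) : ℝ)).mono' (hXmeas.mul hYae) ?_
    filter_upwards [hXbd] with ω hω
    calc ‖X ω * Y ω‖ = ‖X ω‖ * ‖Y ω‖ := norm_mul _ _
      _ ≤ 3 * (4 + |BS|) * 1 := mul_le_mul hω (hY1 ω) (norm_nonneg _)
          (by positivity)
      _ = 3 * (4 + |BS|) := mul_one _
  have hXm'int : Integrable (fun ω => X ω * m' ω) P := by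
    refine (integrable_const (3 * (4 + |BS|) : ℝ)).mono' (hXmeas.mul hm'meas) ?_
    filter_upwards [hXbd, hm'01] with ω hω hω01
    obtain ⟨ha, hb⟩ := hω01
    calc ‖X ω * m' ω‖ = ‖X ω‖ * ‖m' ω‖ := norm_mul _ _
      _ ≤ 3 * (4 + |BS|) * 1 := by
          apply mul_le_mul hω _ (norm_nonneg _) (by positivity)
          rw [Real.norm_eq_abs, abs_le]; constructor <;> linarith
      _ = 3 * (4 + |BS|) := mul_one _
  have hpull : P[fun ω => X ω * Y ω|𝓖] =ᵐ[P] fun ω => X ω * (P[Y|𝓖]) ω := by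
    have := condExp_stronglyMeasurable_mul_of_bound h𝓖 hXsm hYint
      (3 * (4 + |BS|)) hXbd
    filter_upwards [this] with ω hω
    exact hω
  have hXY_eq : ∫ ω, X ω * Y ω ∂P = ∫ ω, X ω * m' ω ∂P := by
    rw [← integral_condExp h𝓖 (f := fun ω => X ω * Y ω)]
    exact integral_congr_ae hpull
  have hcross' : ∫ ω, g' ω * h' ω ∂P = 0 := by
    have hpt : ∀ ω, g' ω * h' ω = X ω * Y ω - X ω * m' ω := by
      intro ω; simp only [hg'def, hh'def, hXdef]; ring
    rw [integral_congr_ae (Filter.Eventually.of_forall hpt),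
      integral_sub hXYint hXm'int, hXY_eq, sub_self]
  -- pointwise decomposition of the supervised influence function
  have hkey : ∀ ω, ((Y ω - S ω) ^ 2 - BS) ^ 2
      = g' ω ^ 2 + (2 * (g' ω * h' ω) + h' ω ^ 2) := by
    intro ω
    simp only [hg'def, hh'def]
    rcases hY01 ω with hy | hy <;> rw [hy] <;> ring
  have hfsplit : ∫ ω, ((Y ω - S ω) ^ 2 - BS) ^ 2 ∂P
      = (∫ ω, g' ω ^ 2 ∂P) + (2 * (∫ ω, g' ω * h' ω ∂P) + ∫ ω, h' ω ^ 2 ∂P) := by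
    have hin : Integrable (fun ω => 2 * (g' ω * h' ω) + h' ω ^ 2) P :=
      (hghint.const_mul 2).add hh2int
    have hin2 : Integrable (fun ω => 2 * (g' ω * h' ω)) P := hghint.const_mul 2
    rw [integral_congr_ae (Filter.Eventually.of_forall hkey),
      integral_add hg2int hin, integral_add hin2 hh2int, integral_const_mul 2 fun ω => g' ω * h' ω]
  have hg2eq : ∫ ω, ((Y ω - m ω) * (1 - 2 * S ω)) ^ 2 ∂P = ∫ ω, g' ω ^ 2 ∂P := by
    refine integral_congr_ae ?_
    filter_upwards [hm] with ω hω
    rw [hg'def]; rw [hω]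
  have hh2eq : ∫ ω, ((S ω) ^ 2 - 2 * S ω * m ω + m ω - BS) ^ 2 ∂P
      = ∫ ω, h' ω ^ 2 ∂P := by
    refine integral_congr_ae ?_
    filter_upwards [hm] with ω hω
    rw [hh'def]; rw [hω]
  have hh2nonneg : 0 ≤ ∫ ω, h' ω ^ 2 ∂P :=
    integral_nonneg fun ω => sq_nonneg _
  constructor
  · rw [hg2eq, hfsplit, hcross']; linarith
  · rw [hg2eq, hh2eq, hfsplit, hcross']; ring
end
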